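/- arXiv:2110.11255 — 6 statements merged into one kernel-verified Lean document; each statement's English description precedes it below -/
import Mathlib

section
/- Let Λ be a nonempty set and let K ⊆ (Λ → ℝ) be a convex cone of real-valued functions (closed under addition and under multiplication by nonnegative scalars) whose linear span has finite dimension k ≥ 1, and suppose K is closed under pointwise multiplication (f, g ∈ K implies f·g ∈ K). Then there exist nonempty pairwise disjoint subsets A₁, …, A_k ⊆ Λ such that every f ∈ K can be written as f(λ) = Σ_{i=1}^k v_i·1_{A_i}(λ) with v₁, …, v_k ∈ ℝ; moreover the unordered family {A₁, …, A_k} with these properties is unique. -/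
/-!
Let `V` be the span of `K`; it is closed under pointwise multiplication. Every point `x` gives a
multiplicative functional `f ↦ f x` on `V`, and by Dedekind's lemma (in a non-unital form) the
distinct nonzero ones are linearly independent in the dual of `V`. Since an element of `V`
annihilated by all of them is zero, there are exactly `k` of them and joint evaluation
`V → ℝᵏ` is an isomorphism. The preimage of the `i`-th unit vector is then the indicator of the set
`Aᵢ` of points whose evaluation is the `i`-th functional, so these `k` indicators span `V`.

For uniqueness, call `C` a band of `V` if `1_C ∈ V` and every element of `V` is constant on `C`.
Two bands that meet coincide, and whenever `k` disjoint nonempty sets have indicators spanning `V`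
(for the `Bᵢ` this follows by counting dimensions) the bands of `V` are exactly these sets.
-/

open Set Module Function Submodule

theorem linearIndependent_mulHom {ι G L : Type*} [Mul G] [CommRing L] [IsDomain L]
    (f : ι → G →ₙ* L) (hf : Injective f) (hne : ∀ i, ∃ a, f i a ≠ 0) :
    LinearIndependent L (fun i => ⇑(f i)) := by
  have hlift : LinearIndependent L (fun i => ⇑(WithOne.lift (f i))) :=
    (linearIndependent_monoidHom (WithOne G) L).comp _ (WithOne.lift.injective.comp hf)
  rw [linearIndependent_iff'] at hlift ⊢
  intro s c hc i hi
  obtain ⟨a, ha⟩ := hne i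
  -- Weighting the relation by `f j a` makes it hold at the adjoined unit as well.
  have hshift : ∑ j ∈ s, (c j * f j a) • ⇑(WithOne.lift (f j)) = 0 := by
    funext g
    cases g with
    | one => simpa using congrFun hc a
    | coe g => simpa [mul_assoc] using congrFun hc (a * g)
  exact (mul_eq_zero.1 (hlift s _ hshift i hi)).resolve_right ha

section Bands

variable {𝕜 Λ : Type*} [Field 𝕜]

def IsBand (W : Submodule 𝕜 (Λ → 𝕜)) (C : Set Λ) : Prop :=
  C.Nonempty ∧ C.indicator 1 ∈ W ∧ ∀ f ∈ W, ∀ x ∈ C, ∀ y ∈ C, f x = f y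

namespace IsBand

variable {W : Submodule 𝕜 (Λ → 𝕜)} {C D : Set Λ} {x : Λ}

theorem subset_of_mem (hC : IsBand W C) (hD : IsBand W D) (hxC : x ∈ C) (hxD : x ∈ D) :
    C ⊆ D := by
  intro y hy
  have := hC.2.2 _ hD.2.1 y hy x hxC
  by_contra hyD
  simp [indicator_of_mem hxD, indicator_of_notMem hyD] at this

theorem eq_of_mem (hC : IsBand W C) (hD : IsBand W D) (hxC : x ∈ C) (hxD : x ∈ D) : C = D :=
  (hC.subset_of_mem hD hxC hxD).antisymm (hD.subset_of_mem hC hxD hxC)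

end IsBand

section BandSpan

variable (𝕜) {ι : Type*}

def bandSpan (A : ι → Set Λ) : Submodule 𝕜 (Λ → 𝕜) :=
  span 𝕜 (range fun i => (A i).indicator 1)

variable {𝕜} {A : ι → Set Λ}

theorem mem_bandSpan_iff [Fintype ι] {f : Λ → 𝕜} :
    f ∈ bandSpan 𝕜 A ↔ ∃ v : ι → 𝕜, ∀ x, f x = ∑ i, v i * (A i).indicator 1 x := by
  simp [bandSpan, mem_span_range_iff_exists_fun, funext_iff, Finset.sum_apply, eq_comm]

theorem isBand_bandSpan (hne : ∀ i, (A i).Nonempty) (hA : Pairwise (Disjoint on A)) (i : ι) :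
    IsBand (bandSpan 𝕜 A) (A i) := by
  refine ⟨hne i, subset_span ⟨i, rfl⟩, fun f hf x hx y hy => ?_⟩
  induction hf using span_induction with
  | mem _ hg =>
    obtain ⟨j, rfl⟩ := hg
    rcases eq_or_ne i j with rfl | hij
    · simp [indicator_of_mem hx, indicator_of_mem hy]
    · simp [indicator_of_notMem ((hA hij).notMem_of_mem_left hx),
        indicator_of_notMem ((hA hij).notMem_of_mem_left hy)]
  | zero => rfl
  | add f g _ _ hf hg => simp [hf, hg]
  | smul c f _ hf => simp [hf]

theorem exists_mem_of_mem_bandSpan {f : Λ → 𝕜} (hf : f ∈ bandSpan 𝕜 A) {x : Λ} (hx : f x ≠ 0) :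
    ∃ i, x ∈ A i := by
  induction hf using span_induction with
  | mem _ hg =>
    obtain ⟨j, rfl⟩ := hg
    exact ⟨j, by_contra fun h => hx (indicator_of_notMem h 1)⟩
  | zero => exact absurd rfl hx
  | add f g _ _ hf hg =>
    by_cases hfx : f x = 0
    · exact hg (by simpa [hfx] using hx)
    · exact hf hfx
  | smul c f _ hf => exact hf (right_ne_zero_of_mul hx)

theorem IsBand.exists_eq_of_bandSpan {C : Set Λ} (hC : IsBand (bandSpan 𝕜 A) C)
    (hne : ∀ i, (A i).Nonempty) (hA : Pairwise (Disjoint on A)) : ∃ i, C = A i := by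
  obtain ⟨x, hx⟩ := hC.1
  obtain ⟨i, hi⟩ := exists_mem_of_mem_bandSpan hC.2.1 (x := x) (by simp [hx])
  exact ⟨i, hC.eq_of_mem (isBand_bandSpan hne hA i) hx hi⟩

theorem exists_perm_of_bandSpan_eq [Finite ι] {B : ι → Set Λ}
    (hAne : ∀ i, (A i).Nonempty) (hA : Pairwise (Disjoint on A))
    (hBne : ∀ i, (B i).Nonempty) (hB : Pairwise (Disjoint on B))
    (h : bandSpan 𝕜 A = bandSpan 𝕜 B) : ∃ σ : Equiv.Perm ι, ∀ i, B i = A (σ i) := by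
  choose σ hσ using fun i => (h ▸ isBand_bandSpan hBne hB i).exists_eq_of_bandSpan hAne hA
  have hσ_inj : Injective σ := fun i j hij => by
    by_contra hne
    obtain ⟨x, hx⟩ := hBne i
    exact (hB hne).notMem_of_mem_left hx (by rw [hσ j, ← hij, ← hσ i]; exact hx)
  exact ⟨Equiv.ofBijective σ hσ_inj.bijective_of_finite, hσ⟩

end BandSpan

namespace NonUnitalSubalgebra

variable (V : NonUnitalSubalgebra 𝕜 (Λ → 𝕜))

def evalAt (x : Λ) : V →ₙₐ[𝕜] 𝕜 :=
  (Pi.evalAlgHom 𝕜 (fun _ => 𝕜) x : (Λ → 𝕜) →ₙₐ[𝕜] 𝕜).comp (NonUnitalSubalgebraClass.subtype V)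

@[simp]
theorem evalAt_apply (x : Λ) (f : V) : V.evalAt x f = (f : Λ → 𝕜) x := rfl

def evalChars : Set (V →ₙₐ[𝕜] 𝕜) := range V.evalAt \ {0}

theorem linearIndependent_evalChars :
    LinearIndependent 𝕜 (fun φ : V.evalChars => ((φ : V →ₙₐ[𝕜] 𝕜) : V →ₗ[𝕜] 𝕜)) := by
  refine .of_comp (LinearMap.ltoFun 𝕜 V 𝕜 𝕜) <|
    linearIndependent_mulHom (fun φ : V.evalChars => ((φ : V →ₙₐ[𝕜] 𝕜) : V →ₙ* 𝕜)) ?_ ?_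
  · exact fun φ ψ h => Subtype.ext <| NonUnitalAlgHom.ext fun a => by
      simpa using DFunLike.congr_fun h a
  · intro φ
    by_contra! h
    exact φ.2.2 (NonUnitalAlgHom.ext h)

theorem eq_zero_of_forall_evalChars {f : V} (hf : ∀ φ ∈ V.evalChars, φ f = 0) : f = 0 := by
  ext x
  by_cases hx : V.evalAt x = 0
  · exact congr($hx f)
  · exact hf _ ⟨mem_range_self x, hx⟩

def evalCharsPi : V →ₗ[𝕜] (V.evalChars → 𝕜) :=
  LinearMap.pi fun φ => ((φ : V →ₙₐ[𝕜] 𝕜) : V →ₗ[𝕜] 𝕜)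

theorem injective_evalCharsPi : Injective V.evalCharsPi :=
  (injective_iff_map_eq_zero _).2 fun _ hf =>
    V.eq_zero_of_forall_evalChars fun φ hφ => congrFun hf ⟨φ, hφ⟩

variable [FiniteDimensional 𝕜 V]

noncomputable instance : Fintype V.evalChars :=
  have := V.linearIndependent_evalChars.finite
  Fintype.ofFinite _

theorem finrank_eq_card_evalChars : finrank 𝕜 V = Fintype.card V.evalChars := by
  refine le_antisymm ?_ ?_
  · simpa using LinearMap.finrank_le_finrank_of_injective V.injective_evalCharsPi
  · simpa [Subspace.dual_finrank_eq] using V.linearIndependent_evalChars.fintype_card_le_finrank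

theorem surjective_evalCharsPi : Surjective V.evalCharsPi :=
  (LinearMap.injective_iff_surjective_of_finrank_eq_finrank (by
    simp [finrank_eq_card_evalChars])).1 V.injective_evalCharsPi

theorem indicator_preimage_evalAt_mem {φ : V →ₙₐ[𝕜] 𝕜} (hφ : φ ∈ V.evalChars) :
    (V.evalAt ⁻¹' {φ}).indicator 1 ∈ V := by
  classical
  obtain ⟨e, he⟩ := V.surjective_evalCharsPi (Pi.single ⟨φ, hφ⟩ 1)
  convert e.2
  funext x
  by_cases hx : V.evalAt x = 0
  · have hxφ : V.evalAt x ≠ φ := hx ▸ Ne.symm hφ.2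
    simpa [hxφ] using congr($hx e).symm
  · have : (e : Λ → 𝕜) x = _ := congrFun he ⟨_, mem_range_self x, hx⟩
    simp [this, Pi.single_apply, indicator_apply, Subtype.ext_iff]

theorem toSubmodule_eq_bandSpan_preimage_evalAt :
    V.toSubmodule = bandSpan 𝕜 fun φ : V.evalChars => V.evalAt ⁻¹' {(φ : V →ₙₐ[𝕜] 𝕜)} := by
  refine le_antisymm (fun f hf => ?_)
    (span_le.2 <| range_subset_iff.2 fun φ => V.indicator_preimage_evalAt_mem φ.2)
  refine mem_bandSpan_iff.2 ⟨fun φ : V.evalChars => φ.1 ⟨f, hf⟩, fun x => ?_⟩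
  by_cases hx : V.evalAt x = 0
  · have hxφ (φ : V.evalChars) : V.evalAt x ≠ φ := hx ▸ Ne.symm φ.2.2
    simpa [hxφ] using congr($hx ⟨f, hf⟩)
  · rw [Finset.sum_eq_single ⟨V.evalAt x, mem_range_self x, hx⟩]
    · simp
    · intro φ _ hφ
      simp [show V.evalAt x ≠ φ from fun h => hφ (Subtype.ext h).symm]
    · simp

theorem exists_toSubmodule_eq_bandSpan : ∃ A : Fin (finrank 𝕜 V) → Set Λ,
    (∀ i, (A i).Nonempty) ∧ Pairwise (Disjoint on A) ∧ V.toSubmodule = bandSpan 𝕜 A := by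
  let e : Fin (finrank 𝕜 V) ≃ V.evalChars :=
    (Fintype.equivFinOfCardEq V.finrank_eq_card_evalChars.symm).symm
  refine ⟨fun i => V.evalAt ⁻¹' {(e i : V →ₙₐ[𝕜] 𝕜)}, fun i => ?_, fun i j hij => ?_, ?_⟩
  · obtain ⟨x, hx⟩ := (e i).2.1
    exact ⟨x, hx⟩
  · exact (disjoint_singleton.2 fun h => hij (e.injective (Subtype.ext h))).preimage _
  · rw [toSubmodule_eq_bandSpan_preimage_evalAt, bandSpan, bandSpan]
    exact congrArg _ (e.surjective.range_comp _).symm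

end NonUnitalSubalgebra

end Bands

theorem banded_model_unique_general {Λ : Type*} (K : Set (Λ → ℝ)) (k : ℕ)
    (hfd : FiniteDimensional ℝ (Submodule.span ℝ K))
    (hrank : Module.finrank ℝ (Submodule.span ℝ K) = k)
    (hmul : ∀ f ∈ K, ∀ g ∈ K, f * g ∈ K) :
    ∃ A : Fin k → Set Λ,
      (∀ i, (A i).Nonempty) ∧
      (∀ i j, i ≠ j → Disjoint (A i) (A j)) ∧
      (∀ f ∈ K, ∃ v : Fin k → ℝ, ∀ lam, f lam = ∑ i, v i * (A i).indicator 1 lam) ∧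
      ∀ B : Fin k → Set Λ,
        (∀ i, (B i).Nonempty) →
        (∀ i j, i ≠ j → Disjoint (B i) (B j)) →
        (∀ f ∈ K, ∃ v : Fin k → ℝ, ∀ lam, f lam = ∑ i, v i * (B i).indicator 1 lam) →
        ∃ σ : Equiv.Perm (Fin k), ∀ i, B i = A (σ i) := by
  let V := NonUnitalAlgebra.adjoin ℝ K
  have hV : V.toSubmodule = span ℝ K := by
    rw [NonUnitalAlgebra.adjoin_eq_span]
    exact congrArg _ <| congrArg SetLike.coe <|
      Subsemigroup.closure_eq ⟨K, fun ha hb => hmul _ ha _ hb⟩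
  have : FiniteDimensional ℝ V.toSubmodule := hV ▸ hfd
  have : FiniteDimensional ℝ V := V.toSubmoduleEquiv.finiteDimensional
  have hVk : finrank ℝ V = k := by rw [← V.toSubmoduleEquiv.finrank_eq, hV, hrank]
  subst hVk
  obtain ⟨A, hAne, hA, hAspan⟩ := V.exists_toSubmodule_eq_bandSpan
  rw [hV] at hAspan
  refine ⟨A, hAne, fun i j h => hA h, fun f hf => mem_bandSpan_iff.1 (hAspan ▸ subset_span hf),
    fun B hBne hB hBrep => ?_⟩
  have hle : span ℝ K ≤ bandSpan ℝ B := span_le.2 fun f hf => mem_bandSpan_iff.2 (hBrep f hf)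
  have : FiniteDimensional ℝ (bandSpan ℝ B) := FiniteDimensional.span_of_finite ℝ (finite_range _)
  have hBspan := eq_of_le_of_finrank_le hle ((finrank_range_le_card _).trans (by simp [hrank]))
  exact exists_perm_of_bandSpan_eq hAne hA hBne (fun i j h => hB i j h) (hAspan.symm.trans hBspan)

/-- a `k`-dimensional convex cone of functions `Λ → ℝ` which is closed under
pointwise multiplication consists exactly of the functions which are constant on each of `k`
uniquely determined nonempty pairwise disjoint sets `A₁, …, A_k` and vanish elsewhere
(the banded spectral model). -/
theorem banded_model_unique {Λ : Type*} [Nonempty Λ] (K : Set (Λ → ℝ)) (k : ℕ) (hk : 1 ≤ k)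
    (hadd : ∀ f ∈ K, ∀ g ∈ K, f + g ∈ K)
    (hsmul : ∀ f ∈ K, ∀ c : ℝ, 0 ≤ c → c • f ∈ K)
    (hfd : FiniteDimensional ℝ (Submodule.span ℝ K))
    (hrank : Module.finrank ℝ (Submodule.span ℝ K) = k)
    (hmul : ∀ f ∈ K, ∀ g ∈ K, f * g ∈ K) :
    ∃ A : Fin k → Set Λ,
      (∀ i, (A i).Nonempty) ∧
      (∀ i j, i ≠ j → Disjoint (A i) (A j)) ∧
      (∀ f ∈ K, ∃ v : Fin k → ℝ, ∀ lam, f lam = ∑ i, v i * (A i).indicator 1 lam) ∧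
      ∀ B : Fin k → Set Λ,
        (∀ i, (B i).Nonempty) →
        (∀ i j, i ≠ j → Disjoint (B i) (B j)) →
        (∀ f ∈ K, ∃ v : Fin k → ℝ, ∀ lam, f lam = ∑ i, v i * (B i).indicator 1 lam) →
        ∃ σ : Equiv.Perm (Fin k), ∀ i, B i = A (σ i) :=
  banded_model_unique_general K k hfd hrank hmul
end

section
/- For every n ∈ ℕ, every c₁, …, c_n ∈ T = conv(η([λmin, λmax])) and every ε > 0 there exist pairwise disjoint closed sets A₁, …, A_n ⊆ [λmin, λmax] with μ̃(A_i) > 0 such that ‖c_i − μ̃(A_i)^{-1} ∫_{A_i} η dμ̃‖ ≤ ε for every 1 ≤ i ≤ n. In other words, any matrix with columns in the (closed) color triangle is, up to arbitrarily small error, the transition matrix of some banded spectral model. -/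
open MeasureTheory Set

noncomputable section

abbrev E3 := EuclideanSpace ℝ (Fin 3)

/-- The affine hyperplane `A = {x ∈ ℝ³ : x₁ + x₂ + x₃ = 1}`. -/
def planeA : Set E3 := {x | x 0 + x 1 + x 2 = 1}

/-- The standard 2-simplex `Δ²`. -/
def simplex2 : Set E3 := {x | (∀ i, 0 ≤ x i) ∧ x 0 + x 1 + x 2 = 1}

/-- Interior relative to the affine hyperplane `A` (for subsets of `A`). -/
def intA (s : Set E3) : Set E3 :=
  {x | x ∈ planeA ∧ ∃ U : Set E3, IsOpen U ∧ x ∈ U ∧ U ∩ planeA ⊆ s}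

lemma cdf_continuous (mu : Measure ℝ) [IsFiniteMeasure mu] [NullSingletonClass mu] (u : ℝ) :
    Continuous fun x => (mu (Icc u x)).toReal := by
  rw [Metric.continuous_iff]
  intro b ε hε
  have h0 := tendsto_measure_Icc mu b
  have hev : ∀ᶠ r in nhds (0:ℝ), mu (Icc (b - r) (b + r)) < ENNReal.ofReal ε :=
    h0.eventually_lt_const (by simp [hε])
  rw [Metric.eventually_nhds_iff] at hev
  obtain ⟨r0, hr0, hball⟩ := hev
  refine ⟨r0/2, by positivity, fun y hy => ?_⟩
  have hkey : mu (Icc (b - r0/2) (b + r0/2)) < ENNReal.ofReal ε := by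
    apply hball
    rw [Real.dist_eq, sub_zero, abs_of_pos (by positivity)]; linarith
  have hfin : ∀ s : Set ℝ, mu s ≠ ⊤ := fun s => measure_ne_top mu s
  have hmono : ∀ {x y : ℝ}, x ≤ y → (mu (Icc u x)).toReal ≤ (mu (Icc u y)).toReal := by
    intro x y hxy
    exact ENNReal.toReal_mono (hfin _) (measure_mono (Icc_subset_Icc_right hxy))
  rw [Real.dist_eq] at hy
  have hsub : ∀ {x y : ℝ}, x ≤ y →
      (mu (Icc u y)).toReal ≤ (mu (Icc u x)).toReal + (mu (Icc x y)).toReal := by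
    intro x y hxy
    have h1 : mu (Icc u y) ≤ mu (Icc u x) + mu (Icc x y) := by
      refine le_trans (measure_mono ?_) (measure_union_le _ _)
      intro z hz
      rcases le_total z x with h | h
      · exact Or.inl ⟨hz.1, h⟩
      · exact Or.inr ⟨h, hz.2⟩
    calc (mu (Icc u y)).toReal ≤ (mu (Icc u x) + mu (Icc x y)).toReal :=
          ENNReal.toReal_mono (by simp [ENNReal.add_ne_top, hfin _]) h1
      _ = _ := ENNReal.toReal_add (hfin _) (hfin _)
  have hin : ∀ {x y : ℝ}, |x - b| < r0/2 → |y - b| < r0/2 →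
      (mu (Icc x y)).toReal ≤ (mu (Icc (b - r0/2) (b + r0/2))).toReal := by
    intro x y hx1 hy1
    refine ENNReal.toReal_mono (hfin _) (measure_mono ?_)
    intro z hz
    cases' abs_lt.1 hx1 with h1 h2
    cases' abs_lt.1 hy1 with h3 h4
    exact ⟨by cases hz; linarith, by cases hz; linarith⟩
  have hlt : (mu (Icc (b - r0/2) (b + r0/2))).toReal < ε :=
    ENNReal.toReal_lt_of_lt_ofReal hkey
  have hbb : |b - b| < r0/2 := by simp; positivity
  rw [Real.dist_eq]
  rcases le_total y b with h | h
  · rw [abs_of_nonpos (by linarith [hmono h])]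
    have h2 := hsub h
    have h3 := hin hy hbb
    linarith
  · rw [abs_of_nonneg (by linarith [hmono h])]
    have h2 := hsub h
    have h3 := hin hbb hy
    linarith

lemma exists_Icc_measure_eq (mu : Measure ℝ) [IsFiniteMeasure mu] [NullSingletonClass mu]
    {u v : ℝ} (huv : u ≤ v) {r : ℝ} (hr0 : 0 ≤ r) (hr : r ≤ (mu (Icc u v)).toReal) :
    ∃ x ∈ Icc u v, (mu (Icc u x)).toReal = r := by
  have h := intermediate_value_Icc huv (cdf_continuous mu u).continuousOn
  have h0 : (mu (Icc u u)).toReal = 0 := by simp [Icc_self]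
  have hmem : r ∈ Icc ((mu (Icc u u)).toReal) ((mu (Icc u v)).toReal) := by
    rw [h0]; exact ⟨hr0, hr⟩
  obtain ⟨x, hx, hxr⟩ := h hmem
  exact ⟨x, hx, hxr⟩

lemma convex_fin_rep {E : Type*} [AddCommGroup E] [Module ℝ E] {s : Set E} {x : E}
    (hx : x ∈ convexHull ℝ s) :
    ∃ (m : ℕ) (w : Fin m → ℝ) (z : Fin m → E), 0 < m ∧ (∀ k, 0 ≤ w k) ∧ (∑ k, w k) = 1 ∧
      (∀ k, z k ∈ s) ∧ (∑ k, w k • z k) = x := by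
  rw [convexHull_eq] at hx
  obtain ⟨ι, t, w, z, hw0, hw1, hz, hcm⟩ := hx
  have hx' : t.centerMass w z = ∑ i ∈ t, w i • z i := Finset.centerMass_eq_of_sum_1 _ _ hw1
  have hne : t.Nonempty := by
    rcases t.eq_empty_or_nonempty with h | h
    · exfalso; rw [h] at hw1; simp at hw1
    · exact h
  set e := t.equivFin with he
  refine ⟨t.card, fun k => w (e.symm k : ι), fun k => z (e.symm k : ι), ?_, ?_, ?_, ?_, ?_⟩
  · rwa [Finset.card_pos]
  · intro k; exact hw0 _ (e.symm k).2
  · rw [← hw1, ← Finset.sum_coe_sort t w]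
    exact Equiv.sum_comp e.symm (fun i : {x // x ∈ t} => w i)
  · intro k; exact hz _ (e.symm k).2
  · rw [← hcm, hx', ← Finset.sum_coe_sort t (fun i => w i • z i)]
    exact Equiv.sum_comp e.symm (fun i : {x // x ∈ t} => w i • z i)


set_option maxHeartbeats 1000000 in
/-- any finite family of points of the color triangle
`T = conv(η([λmin, λmax]))` is approximated, with arbitrary precision `ε`, by mean colors of
pairwise disjoint closed sets of positive measure: any matrix with columns in `T` is almost the
transition matrix of a banded spectral model. -/
theorem banded_model_matrix_approximation
    (lmin lmax : ℝ) (hlmin : 0 ≤ lmin) (hlt : lmin < lmax)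
    (η : ℝ → E3)
    (hηcont : ContinuousOn η (Icc lmin lmax))
    (hηΔ : ∀ lam ∈ Icc lmin lmax, η lam ∈ simplex2)
    (mu : Measure ℝ) (hfin : IsFiniteMeasure mu)
    (hatomless : ∀ x : ℝ, mu {x} = 0)
    (hconc : mu (Icc lmin lmax)ᶜ = 0)
    (hsupp : ∀ a b : ℝ, lmin ≤ a → a < b → b ≤ lmax → 0 < mu (Icc a b))
    (hTint : (intA (convexHull ℝ (η '' Icc lmin lmax))).Nonempty)
    (n : ℕ) (c : Fin n → E3)
    (hc : ∀ i, c i ∈ convexHull ℝ (η '' Icc lmin lmax))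
    (ε : ℝ) (hε : 0 < ε) :
    ∃ A : Fin n → Set ℝ,
      (∀ i, IsClosed (A i)) ∧
      (∀ i, A i ⊆ Icc lmin lmax) ∧
      (∀ i, 0 < mu (A i)) ∧
      (∀ i j, i ≠ j → Disjoint (A i) (A j)) ∧
      ∀ i, ‖c i - (mu (A i)).toReal⁻¹ • ∫ lam in A i, η lam ∂mu‖ ≤ ε := by
  haveI := hfin
  haveI : NullSingletonClass mu := ⟨hatomless⟩
  rcases Nat.eq_zero_or_pos n with hn | hn
  · subst hn
    exact ⟨fun _ => ∅, fun i => i.elim0, fun i => i.elim0, fun i => i.elim0,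
      fun i => i.elim0, fun i => i.elim0⟩
  -- Step 1: finite convex representations
  have H : ∀ i : Fin n, ∃ (m : ℕ) (w : Fin m → ℝ) (lam : Fin m → ℝ), 0 < m ∧
      (∀ k, 0 ≤ w k) ∧ (∑ k, w k) = 1 ∧ (∀ k, lam k ∈ Icc lmin lmax) ∧
      (∑ k, w k • η (lam k)) = c i := by
    intro i
    obtain ⟨m, w, z, hm, hw0, hw1, hz, hsum⟩ := convex_fin_rep (hc i)
    have hz' : ∀ k, ∃ lam, lam ∈ Icc lmin lmax ∧ η lam = z k := by
      intro k
      obtain ⟨l, hl, hηl⟩ := hz k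
      exact ⟨l, hl, hηl⟩
    choose lam hlam hηlam using hz'
    refine ⟨m, w, lam, hm, hw0, hw1, hlam, ?_⟩
    simpa only [hηlam] using hsum
  choose m w lam hm hw0 hw1 hlam hrep using H
  -- Step 2: uniform continuity
  have hucont : UniformContinuousOn η (Icc lmin lmax) :=
    isCompact_Icc.uniformContinuousOn_of_continuous hηcont
  obtain ⟨δ, hδ, hδη⟩ :=
    (Metric.uniformContinuousOn_iff_le).1 hucont ε hε
  -- Step 3: geometry of disjoint intervals
  set P := (i : Fin n) × Fin (m i) with hP
  haveI : Nonempty P := ⟨⟨⟨0, hn⟩, ⟨0, hm ⟨0, hn⟩⟩⟩⟩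
  set e := Fintype.equivFin P with he
  set C := Fintype.card P with hC
  have hCpos : 0 < C := Fintype.card_pos
  set N := ⌈(lmax - lmin) / δ⌉₊ with hN
  have hNpos : 0 < N := Nat.ceil_pos.2 (div_pos (by linarith) hδ)
  set h := (lmax - lmin) / N with hh
  have hhpos : 0 < h := by
    apply div_pos (by linarith)
    exact_mod_cast hNpos
  have hNh : (N : ℝ) * h = lmax - lmin := by
    rw [hh]; field_simp
  have hhδ : h ≤ δ := by
    rw [hh, div_le_iff₀ (by exact_mod_cast hNpos)]
    calc lmax - lmin = ((lmax - lmin) / δ) * δ := by field_simp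
      _ ≤ (N : ℝ) * δ := by
          apply mul_le_mul_of_nonneg_right (Nat.le_ceil _) (le_of_lt hδ)
      _ = δ * N := mul_comm _ _
  set s := h / C with hs
  have hspos : 0 < s := div_pos hhpos (by exact_mod_cast hCpos)
  have hCs : (C : ℝ) * s = h := by rw [hs]; field_simp
  set L : P → ℝ := fun p => lam p.1 p.2 with hL
  have hLmem : ∀ p, L p ∈ Icc lmin lmax := fun p => hlam p.1 p.2
  set j : P → ℕ := fun p => min (⌊(L p - lmin) / h⌋₊) (N - 1) with hj
  have hjN : ∀ p, j p ≤ N - 1 := fun p => min_le_right _ _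
  have hj1 : ∀ p, lmin + (j p : ℝ) * h ≤ L p := by
    intro p
    have h1 : (j p : ℝ) ≤ ⌊(L p - lmin) / h⌋₊ := by
      exact_mod_cast min_le_left _ _
    have h2 : (⌊(L p - lmin) / h⌋₊ : ℝ) ≤ (L p - lmin) / h :=
      Nat.floor_le (by
        apply div_nonneg _ (le_of_lt hhpos)
        have := (hLmem p).1; linarith)
    have h3 : (j p : ℝ) * h ≤ L p - lmin := by
      rw [← le_div_iff₀ hhpos] at *
      linarith
    linarith
  have hj2 : ∀ p, L p ≤ lmin + ((j p : ℝ) + 1) * h := by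
    intro p
    rcases le_or_gt (⌊(L p - lmin) / h⌋₊) (N - 1) with hle | hlt'
    · have hjp : j p = ⌊(L p - lmin) / h⌋₊ := min_eq_left hle
      have := Nat.lt_floor_add_one ((L p - lmin) / h)
      rw [← hjp] at this
      have h4 : L p - lmin < ((j p : ℝ) + 1) * h := by
        rw [← div_lt_iff₀ hhpos] at *
        push_cast at this ⊢
        linarith
      linarith
    · have hjp : j p = N - 1 := min_eq_right (le_of_lt hlt')
      have hNj : (j p : ℝ) + 1 = N := by
        rw [hjp]
        have : N - 1 + 1 = N := Nat.succ_pred_eq_of_pos hNpos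
        exact_mod_cast congrArg (Nat.cast : ℕ → ℝ) this
      rw [hNj]
      have := (hLmem p).2
      linarith [hNh]
  set u : P → ℕ := fun p => (j p) * C + (e p : ℕ) with hu
  set a : P → ℝ := fun p => lmin + (u p : ℝ) * s + s / 4 with ha
  set b : P → ℝ := fun p => a p + s / 2 with hb
  have hab : ∀ p, a p < b p := fun p => by simp only [hb]; linarith [hspos]
  have huNC : ∀ p, u p + 1 ≤ N * C := by
    intro p
    have h1 : j p ≤ N - 1 := hjN p
    have h2 : (e p : ℕ) < C := (e p).2
    calc u p + 1 = j p * C + ((e p : ℕ) + 1) := by rw [hu]; ring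
      _ ≤ (N - 1) * C + C := by
          apply Nat.add_le_add (Nat.mul_le_mul_right _ h1) h2
      _ = N * C := by
          have hN1 : N - 1 + 1 = N := Nat.succ_pred_eq_of_pos hNpos
          calc (N - 1) * C + C = ((N - 1) + 1) * C := by ring
            _ = N * C := by rw [hN1]
  have hble : ∀ p, b p ≤ lmax := by
    intro p
    have h1 : ((u p : ℝ) + 1) * s ≤ (N * C : ℕ) * s := by
      apply mul_le_mul_of_nonneg_right _ (le_of_lt hspos)
      exact_mod_cast huNC p
    have h2 : ((N * C : ℕ) : ℝ) * s = lmax - lmin := by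
      push_cast
      rw [mul_assoc, hCs, hNh]
    simp only [hb, ha]
    nlinarith [hspos]
  have hale : ∀ p, lmin ≤ a p := by
    intro p
    simp only [ha]
    have : (0:ℝ) ≤ (u p : ℝ) * s := by positivity
    linarith [hspos]
  set I : P → Set ℝ := fun p => Icc (a p) (b p) with hI
  have hIsub : ∀ p, I p ⊆ Icc lmin lmax := fun p =>
    Icc_subset_Icc (hale p) (hble p)
  -- points of I p are h-close to L p
  have hIclose : ∀ p, ∀ x ∈ I p, |x - L p| ≤ h := by
    intro p x hx
    have hxl : lmin + (j p : ℝ) * h ≤ x := by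
      have h1 : (j p : ℝ) * h ≤ (u p : ℝ) * s := by
        simp only [hu]
        push_cast
        rw [add_mul, mul_assoc, hCs]
        have : (0:ℝ) ≤ (e p : ℕ) * s := by positivity
        linarith
      have := hx.1
      simp only [hI, ha, mem_Icc] at hx
      replace this := hx.1
      linarith [hspos]
    have hxr : x ≤ lmin + ((j p : ℝ) + 1) * h := by
      have h2 : (e p : ℕ) + 1 ≤ C := (e p).2
      have h1 : (u p : ℝ) * s + s ≤ ((j p : ℝ) + 1) * h := by
        simp only [hu]
        push_cast
        rw [add_mul, mul_assoc, hCs, add_mul, one_mul]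
        have h3 : ((e p : ℕ) : ℝ) * s + s ≤ (C : ℝ) * s := by
          have : ((e p : ℕ) : ℝ) + 1 ≤ (C : ℝ) := by exact_mod_cast h2
          nlinarith [hspos]
        rw [hCs] at h3
        linarith
      simp only [hI, hb, ha, mem_Icc] at hx
      have := hx.2
      linarith [hspos]
    have hl1 := hj1 p
    have hl2 := hj2 p
    rw [abs_le]
    constructor <;> nlinarith
  -- disjointness of I's
  have hune : ∀ p q : P, p ≠ q → u p ≠ u q := by
    intro p q hpq hequ
    have hene : (e p : ℕ) ≠ (e q : ℕ) := by
      intro hc'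
      exact hpq (e.injective (Fin.ext hc'))
    apply hene
    have h1 := congrArg (· % C) hequ
    simp only [hu] at h1
    rwa [Nat.mul_add_mod_of_lt (e p).2, Nat.mul_add_mod_of_lt (e q).2] at h1
  have hIdisj : ∀ p q : P, p ≠ q → Disjoint (I p) (I q) := by
    intro p q hpq
    have key : ∀ p q : P, u p < u q → Disjoint (I p) (I q) := by
      intro p q hulta
      rw [Set.disjoint_left]
      intro x hxp hxq
      have h1 : (u p : ℝ) + 1 ≤ (u q : ℝ) := by exact_mod_cast hulta
      have h2 := hxp.2
      have h3 := hxq.1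
      simp only [hb, ha] at h2 h3
      nlinarith [hspos]
    rcases lt_or_gt_of_ne (hune p q hpq) with h' | h'
    · exact key p q h'
    · exact (key q p h').symm
  have hμI : ∀ p, 0 < mu (I p) := fun p =>
    hsupp (a p) (b p) (hale p) (hab p) (hble p)
  have hμIfin : ∀ s' : Set ℝ, mu s' ≠ ⊤ := fun s' => measure_ne_top mu s'
  have hμItoReal : ∀ p, 0 < (mu (I p)).toReal := fun p =>
    ENNReal.toReal_pos (ne_of_gt (hμI p)) (hμIfin _)
  -- Step 4: the min measure per column
  have hesne : ∀ i : Fin n, (Finset.univ : Finset (Fin (m i))).Nonempty :=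
    fun i => ⟨⟨0, hm i⟩, Finset.mem_univ _⟩
  set ν : Fin n → ℝ := fun i =>
    Finset.inf' Finset.univ (hesne i) (fun k => (mu (I ⟨i, k⟩)).toReal) with hν
  have hνpos : ∀ i, 0 < ν i := by
    intro i
    rw [hν]
    rw [Finset.lt_inf'_iff]
    exact fun k _ => hμItoReal _
  have hνle : ∀ i k, ν i ≤ (mu (I ⟨i, k⟩)).toReal := by
    intro i k
    exact Finset.inf'_le _ (Finset.mem_univ k)
  have hwle1 : ∀ i k, w i k ≤ 1 := by
    intro i k
    rw [← hw1 i]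
    exact Finset.single_le_sum (fun k' _ => hw0 i k') (Finset.mem_univ k)
  -- Step 5: choose subintervals with exact measure
  have HB : ∀ p : P, ∃ x ∈ Icc (a p) (b p),
      (mu (Icc (a p) x)).toReal = w p.1 p.2 * ν p.1 := by
    intro p
    apply exists_Icc_measure_eq mu (le_of_lt (hab p))
    · exact mul_nonneg (hw0 p.1 p.2) (le_of_lt (hνpos p.1))
    · calc w p.1 p.2 * ν p.1 ≤ 1 * ν p.1 := by
            apply mul_le_mul_of_nonneg_right (hwle1 p.1 p.2) (le_of_lt (hνpos p.1))
        _ = ν p.1 := one_mul _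
        _ ≤ (mu (I ⟨p.1, p.2⟩)).toReal := hνle p.1 p.2
  choose X hX hXmeas using HB
  set B : P → Set ℝ := fun p => Icc (a p) (X p) with hB
  have hBsubI : ∀ p, B p ⊆ I p := fun p => Icc_subset_Icc_right (hX p).2
  have hBmeas : ∀ p, (mu (B p)).toReal = w p.1 p.2 * ν p.1 := hXmeas
  have hBdisj : ∀ p q : P, p ≠ q → Disjoint (B p) (B q) :=
    fun p q hpq => (hIdisj p q hpq).mono (hBsubI p) (hBsubI q)
  -- Step 6: the sets A
  set A : Fin n → Set ℝ := fun i => ⋃ k : Fin (m i), B ⟨i, k⟩ with hA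
  have hAclosed : ∀ i, IsClosed (A i) := fun i =>
    isClosed_iUnion_of_finite (fun k => isClosed_Icc)
  have hAsub : ∀ i, A i ⊆ Icc lmin lmax := by
    intro i
    apply iUnion_subset
    intro k
    exact (hBsubI ⟨i, k⟩).trans (hIsub ⟨i, k⟩)
  have hAmeasure : ∀ i, mu (A i) = ∑ k, mu (B ⟨i, k⟩) := by
    intro i
    rw [hA]
    rw [measure_iUnion ?_ (fun k => measurableSet_Icc)]
    · exact tsum_fintype _
    · intro k k' hkk'
      exact hBdisj _ _ (fun hc' => hkk' (eq_of_heq (Sigma.mk.inj_iff.1 hc').2))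
  have hAtoReal : ∀ i, (mu (A i)).toReal = ν i := by
    intro i
    rw [hAmeasure i, ENNReal.toReal_sum (fun k _ => hμIfin _)]
    have : ∀ k : Fin (m i), (mu (B ⟨i, k⟩)).toReal = w i k * ν i := fun k => hBmeas ⟨i, k⟩
    rw [Finset.sum_congr rfl (fun k _ => this k), ← Finset.sum_mul, hw1 i, one_mul]
  have hApos : ∀ i, 0 < mu (A i) := by
    intro i
    rcases eq_or_lt_of_le (zero_le : 0 ≤ mu (A i)) with h0 | h0
    · exfalso
      have := hAtoReal i
      rw [← h0] at this
      simp at this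
      exact absurd this.symm (ne_of_gt (hνpos i))
    · exact h0
  have hAdisj : ∀ i i' : Fin n, i ≠ i' → Disjoint (A i) (A i') := by
    intro i i' hii'
    rw [hA]
    simp only
    rw [Set.disjoint_iUnion_left]
    intro k
    rw [Set.disjoint_iUnion_right]
    intro k'
    exact hBdisj ⟨i, k⟩ ⟨i', k'⟩ (fun hc' => hii' (congrArg Sigma.fst hc'))
  -- integrability
  have hintIcc : IntegrableOn η (Icc lmin lmax) mu :=
    hηcont.integrableOn_compact isCompact_Icc
  have hintA : ∀ i, IntegrableOn η (A i) mu :=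
    fun i => hintIcc.mono_set (hAsub i)
  have hintB : ∀ p : P, IntegrableOn η (B p) mu :=
    fun p => hintIcc.mono_set ((hBsubI p).trans (hIsub p))
  have hintsplit : ∀ i, ∫ l in A i, η l ∂mu = ∑ k, ∫ l in B ⟨i, k⟩, η l ∂mu := by
    intro i
    rw [hA]
    simp only
    rw [integral_iUnion (fun k => measurableSet_Icc)
      (fun k k' hkk' => hBdisj _ _ (fun hc' => hkk' (eq_of_heq (Sigma.mk.inj_iff.1 hc').2)))
      (hintA i)]
    exact tsum_fintype _
  -- final estimate
  refine ⟨A, hAclosed, hAsub, hApos, hAdisj, ?_⟩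
  intro i
  rw [hAtoReal i, hintsplit i]
  have hνi := hνpos i
  have key : c i - (ν i)⁻¹ • ∑ k, ∫ l in B ⟨i, k⟩, η l ∂mu
      = ∑ k, (ν i)⁻¹ • ∫ l in B ⟨i, k⟩, (η (L ⟨i, k⟩) - η l) ∂mu := by
    have hterm : ∀ k : Fin (m i),
        (ν i)⁻¹ • ∫ l in B ⟨i, k⟩, (η (L ⟨i, k⟩) - η l) ∂mu
          = w i k • η (lam i k) - (ν i)⁻¹ • ∫ l in B ⟨i, k⟩, η l ∂mu := by
      intro k
      rw [integral_sub (show IntegrableOn (fun _ => η (L ⟨i, k⟩)) (B ⟨i, k⟩) mu from integrableOn_const (hμIfin _) enorm_ne_top)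
        (hintB ⟨i, k⟩)]
      rw [setIntegral_const, smul_sub, smul_smul, Measure.real_def, hBmeas ⟨i, k⟩]
      congr 2
      · rw [mul_comm (w i k) (ν i), ← mul_assoc, inv_mul_cancel₀ (ne_of_gt hνi), one_mul]
    rw [Finset.sum_congr rfl (fun k _ => hterm k), Finset.sum_sub_distrib,
      ← Finset.smul_sum, hrep i]
  rw [key]
  calc ‖∑ k, (ν i)⁻¹ • ∫ l in B ⟨i, k⟩, (η (L ⟨i, k⟩) - η l) ∂mu‖
      ≤ ∑ k, ‖(ν i)⁻¹ • ∫ l in B ⟨i, k⟩, (η (L ⟨i, k⟩) - η l) ∂mu‖ :=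
        norm_sum_le _ _
    _ ≤ ∑ k : Fin (m i), (ν i)⁻¹ * (ε * (mu (B ⟨i, k⟩)).toReal) := by
        apply Finset.sum_le_sum
        intro k _
        rw [norm_smul, Real.norm_eq_abs, abs_of_pos (inv_pos.2 hνi)]
        apply mul_le_mul_of_nonneg_left _ (le_of_lt (inv_pos.2 hνi))
        apply norm_setIntegral_le_of_norm_le_const (lt_top_iff_ne_top.2 (hμIfin _))
        · intro x hx
          have hxI : x ∈ I ⟨i, k⟩ := hBsubI _ hx
          have hxIcc : x ∈ Icc lmin lmax := hIsub _ hxI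
          have hd : dist (η (L ⟨i, k⟩)) (η x) ≤ ε := by
            apply hδη _ (hLmem ⟨i, k⟩) _ hxIcc
            rw [Real.dist_eq, abs_sub_comm]
            exact le_trans (hIclose _ _ hxI) hhδ
          rw [← dist_eq_norm]
          exact hd
    _ = (ν i)⁻¹ * ε * ∑ k : Fin (m i), (mu (B ⟨i, k⟩)).toReal := by
        rw [Finset.mul_sum]
        exact Finset.sum_congr rfl (fun k _ => by ring)
    _ = (ν i)⁻¹ * ε * ν i := by
        congr 1
        have hstep : (∑ k : Fin (m i), (mu (B ⟨i, k⟩)).toReal)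
            = ∑ k : Fin (m i), w i k * ν i :=
          Finset.sum_congr rfl (fun k _ => hBmeas ⟨i, k⟩)
        rw [hstep, ← Finset.sum_mul, hw1 i, one_mul]
    _ = ε := by field_simp
end
end

section
/- Let Δλ > 0 and let h : ℝ → ℝ be a continuous Δλ-periodic function that attains its maximum at exactly one point of each period (equivalently, at a unique point of ℝ/(Δλℤ)). Suppose the generalized von Mises family F = { λ ↦ exp(b + a·h(λ − s)) : a ≥ 0, b ∈ ℝ, s ∈ ℝ } is closed under pointwise multiplication, i.e. for all a, a' ≥ 0, b, b' ∈ ℝ, s, s' ∈ ℝ there exist a'' ≥ 0, b'' ∈ ℝ, s'' ∈ ℝ with exp(b + a·h(λ−s))·exp(b' + a'·h(λ−s')) = exp(b'' + a''·h(λ−s'')) for all λ ∈ ℝ. Then there exist c₀ ∈ ℝ, A > 0 and λ₀ ∈ ℝ such that h(λ) = c₀ + A·cos(2π(λ − λ₀)/Δλ) for all λ ∈ ℝ, i.e. F is the von Mises family. -/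
open Real

section VonMisesAux

open MeasureTheory AddCircle Complex Real

open MeasureTheory AddCircle Complex Real

variable {T : ℝ} [hT : Fact (0 < T)]

lemma my_fourier_add_apply (n : ℤ) (x y : AddCircle T) :
    fourier n (x + y) = fourier n x * fourier n y := by
  rw [fourier_apply, fourier_apply, fourier_apply, smul_add, AddCircle.toCircle_add]
  norm_cast

lemma integral_fourier_eq_zero {n : ℤ} (hn : n ≠ 0) :
    ∫ t : AddCircle T, fourier n t ∂haarAddCircle = 0 := by
  have h1 : ∫ t : AddCircle T, fourier n t ∂haarAddCircle
      = ∫ t : AddCircle T, fourier n (t + ((T / 2 / n : ℝ) : AddCircle T)) ∂haarAddCircle := by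
    rw [integral_add_right_eq_self (μ := haarAddCircle) (fun t : AddCircle T => fourier n t)]
  have h2 : ∀ t : AddCircle T, fourier n (t + ((T / 2 / n : ℝ) : AddCircle T)) = - fourier n t :=
    fun t => fourier_add_half_inv_index hn hT.out t
  simp_rw [h2, integral_neg] at h1
  linear_combination h1 / 2

lemma my_fourierCoeff_const (c : ℂ) {n : ℤ} (hn : n ≠ 0) :
    fourierCoeff (fun _ : AddCircle T => c) n = 0 := by
  unfold fourierCoeff
  simp_rw [smul_eq_mul, ← smul_eq_mul (b := c), integral_smul_const]
  rw [integral_fourier_eq_zero (neg_ne_zero.mpr hn), zero_smul]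

lemma my_fourierCoeff_translate (f : AddCircle T → ℂ) (s : AddCircle T) (n : ℤ) :
    fourierCoeff (fun x => f (x - s)) n = fourier (-n) s * fourierCoeff f n := by
  unfold fourierCoeff
  have key : ∀ x : AddCircle T, fourier (-n) x • f (x - s)
      = (fun y => fourier (-n) (y + s) • f y) (x - s) := by
    intro x; simp [sub_add_cancel]
  simp_rw [key]
  rw [integral_sub_right_eq_self (fun y => fourier (-n) (y + s) • f y) s]
  simp_rw [smul_eq_mul, my_fourier_add_apply]
  rw [← integral_const_mul]
  congr 1; ext y; ring

lemma my_fourierCoeff_conj (f : AddCircle T → ℂ) (hf : ∀ x, (starRingEnd ℂ) (f x) = f x) (n : ℤ) :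
    fourierCoeff f (-n) = (starRingEnd ℂ) (fourierCoeff f n) := by
  unfold fourierCoeff
  rw [← integral_conj]
  congr 1; ext t
  rw [smul_eq_mul, smul_eq_mul, map_mul, hf t, ← fourier_neg, neg_neg]

lemma my_integrable (f : AddCircle T → ℂ) (hf : Continuous f) (n : ℤ) :
    Integrable (fun t : AddCircle T => fourier (-n) t • f t) haarAddCircle :=
  ((map_continuous (fourier (-n))).smul hf).integrable_of_hasCompactSupport (HasCompactSupport.of_compactSpace _)

lemma my_fourierCoeff_add (f g : AddCircle T → ℂ) (hf : Continuous f) (hg : Continuous g) (n : ℤ) :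
    fourierCoeff (fun x => f x + g x) n = fourierCoeff f n + fourierCoeff g n := by
  unfold fourierCoeff
  simp_rw [smul_add]
  exact integral_add (my_integrable f hf n) (my_integrable g hg n)

-- trig lemma
lemma my_cos_helper (p q : ℕ) (hp : 0 < p) (hpq : p < q)
    (hc : ∀ θ : ℝ, Real.cos (p * θ) = Real.cos (q * θ)) : False := by
  have hπ := Real.pi_pos
  have hqR : (0:ℝ) < q := by exact_mod_cast hp.trans hpq
  have h1 : Real.cos ((p:ℝ) * (π / q)) = -1 := by
    rw [hc, show (q:ℝ) * (π/q) = π by field_simp]; exact Real.cos_pi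
  have h2 : Real.cos ((p:ℝ) * (π / q) + π) = 1 := by
    rw [Real.cos_add_pi, h1]; ring
  obtain ⟨k, hk⟩ := (Real.cos_eq_one_iff _).mp h2
  have hb1 : 0 < (p:ℝ) * (π / q) := by positivity
  have hb2 : (p:ℝ) * (π / q) < π := by
    rw [mul_div_assoc']
    rw [div_lt_iff₀ hqR]
    have hpq' : (p:ℝ) < q := by exact_mod_cast hpq
    nlinarith
  have hk1 : (1:ℝ) < 2 * k := by nlinarith
  have hk2 : (2:ℝ) * k < 2 := by nlinarith
  have hk1' : (1:ℤ) < 2 * k := by exact_mod_cast hk1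
  have hk2' : (2:ℤ) * k < 2 := by exact_mod_cast hk2
  omega

lemma my_cos_eq (n m : ℤ) (hn : n ≠ 0) (hm : m ≠ 0)
    (hc : ∀ θ : ℝ, Real.cos (n * θ) = Real.cos (m * θ)) : m = n ∨ m = -n := by
  have habs : ∀ θ : ℝ, Real.cos (n.natAbs * θ) = Real.cos (m.natAbs * θ) := by
    intro θ
    have h1 : ((n.natAbs : ℝ) * θ) = |(n:ℝ)| * θ := by
      rw [Nat.cast_natAbs, Int.cast_abs]
    have h2 : ((m.natAbs : ℝ) * θ) = |(m:ℝ)| * θ := by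
      rw [Nat.cast_natAbs, Int.cast_abs]
    rcases abs_choice (n:ℝ) with h | h <;> rcases abs_choice (m:ℝ) with h' | h' <;>
      rw [h1, h2, h, h'] <;>
      first
      | exact hc θ
      | (simp only [neg_mul, Real.cos_neg]; exact hc θ)
  have hnn : 0 < n.natAbs := Int.natAbs_pos.mpr hn
  have hmm : 0 < m.natAbs := Int.natAbs_pos.mpr hm
  have heq : n.natAbs = m.natAbs := by
    rcases lt_trichotomy n.natAbs m.natAbs with hlt | he | hgt
    · exact absurd (my_cos_helper _ _ hnn hlt habs) (by simp)
    · exact he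
    · exact absurd (my_cos_helper _ _ hmm hgt (fun θ => (habs θ).symm)) (by simp)
  rcases Int.natAbs_eq_natAbs_iff.mp heq.symm with h | h
  · exact Or.inl h
  · exact Or.inr h

lemma my_fourier_real {T : ℝ} [Fact (0 < T)] (n : ℤ) (s : ℝ) :
    fourier n ((s : ℝ) : AddCircle T) = Complex.exp (((2 * π * n * s / T : ℝ) : ℂ) * Complex.I) := by
  rw [fourier_coe_apply]
  congr 1
  push_cast
  ring

lemma my_abs_one_add_exp (θ : ℝ) :
    ‖1 + Complex.exp ((θ : ℂ) * Complex.I)‖^2 = 2 + 2 * Real.cos θ := by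
  rw [Complex.sq_norm, Complex.normSq_apply, Complex.exp_mul_I]
  simp only [Complex.add_re, Complex.add_im, Complex.one_re, Complex.one_im,
    Complex.mul_re, Complex.mul_im, Complex.I_re, Complex.I_im,
    Complex.cos_ofReal_re, Complex.cos_ofReal_im, Complex.sin_ofReal_re, Complex.sin_ofReal_im]
  ring_nf
  nlinarith [Real.sin_sq_add_cos_sq θ]

lemma my_abs_sq {T : ℝ} [Fact (0 < T)] (n : ℤ) (s : ℝ) :
    ‖1 + fourier (-n) ((s : ℝ) : AddCircle T)‖^2
      = 2 + 2 * Real.cos (2 * π * n * s / T) := by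
  rw [my_fourier_real, my_abs_one_add_exp]
  congr 1
  rw [show (2 * π * (-n : ℤ) * s / T : ℝ) = -(2 * π * n * s / T) by push_cast; ring, Real.cos_neg]

end VonMisesAux

open MeasureTheory AddCircle

/-- if the generalized von Mises family generated by a continuous `Δλ`-periodic
function `h`, attaining its maximum at exactly one point per period, is closed under pointwise
multiplication, then `h(λ) = c₀ + A·cos(2π(λ − lam₀)/Δλ)`, i.e. the family is the von Mises one. -/
theorem von_mises_unique_mult_closed
    (Δlam : ℝ) (hΔ : 0 < Δlam) (h : ℝ → ℝ)
    (hcont : Continuous h)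
    (hper : Function.Periodic h Δlam)
    (hmax : ∃ m : ℝ, (∀ x, h x ≤ h m) ∧ ∀ x, h x = h m → ∃ k : ℤ, x = m + k * Δlam)
    (hclosed : ∀ a : ℝ, 0 ≤ a → ∀ a' : ℝ, 0 ≤ a' → ∀ b b' s s' : ℝ,
      ∃ a'' : ℝ, 0 ≤ a'' ∧ ∃ b'' s'' : ℝ, ∀ lam : ℝ,
        Real.exp (b + a * h (lam - s)) * Real.exp (b' + a' * h (lam - s')) =
          Real.exp (b'' + a'' * h (lam - s''))) :
    ∃ c₀ A lam₀ : ℝ, 0 < A ∧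
      ∀ lam : ℝ, h lam = c₀ + A * Real.cos (2 * π * (lam - lam₀) / Δlam) := by
  haveI : Fact (0 < Δlam) := ⟨hΔ⟩
  set H : AddCircle Δlam → ℂ := fun x => ((hper.lift x : ℝ) : ℂ) with hH
  have Hcont : Continuous H := Complex.continuous_ofReal.comp (continuous_coinduced_dom.mpr hcont)
  have Hcoe : ∀ lam : ℝ, H ((lam : ℝ) : AddCircle Δlam) = ((h lam : ℝ) : ℂ) := by
    intro lam; simp [hH, hper.lift_coe]
  have key : ∀ s : ℝ, ∃ a : ℝ, 0 ≤ a ∧ ∃ b σ : ℝ, ∀ x : AddCircle Δlam,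
      H x + H (x - ((s : ℝ) : AddCircle Δlam)) = (b : ℂ) + (a : ℂ) * H (x - ((σ : ℝ) : AddCircle Δlam)) := by
    intro s
    obtain ⟨a, ha, b, σ, hfe⟩ := hclosed 1 zero_le_one 1 zero_le_one 0 0 0 s
    refine ⟨a, ha, b, σ, ?_⟩
    intro x
    obtain ⟨lam, rfl⟩ := QuotientAddGroup.mk_surjective x
    have h1 := hfe lam
    rw [← Real.exp_add] at h1
    have h2 := Real.exp_injective h1
    have h3 : h lam + h (lam - s) = b + a * h (lam - σ) := by
      rw [sub_zero] at h2; linarith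
    have e1 : ((lam : ℝ) : AddCircle Δlam) - ((s:ℝ) : AddCircle Δlam) = ((lam - s : ℝ) : AddCircle Δlam) := by
      norm_cast
    have e2 : ((lam : ℝ) : AddCircle Δlam) - ((σ:ℝ) : AddCircle Δlam) = ((lam - σ : ℝ) : AddCircle Δlam) := by
      norm_cast
    rw [e1, e2, Hcoe, Hcoe, Hcoe]
    exact_mod_cast congrArg (fun r : ℝ => (r : ℂ)) h3
  set F : ℤ → ℂ := fun n => fourierCoeff H n with hF
  have coeffRel : ∀ s : ℝ, ∃ a : ℝ, 0 ≤ a ∧ ∃ σ : ℝ, ∀ n : ℤ, n ≠ 0 →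
      (1 + fourier (-n) ((s:ℝ) : AddCircle Δlam)) * F n
        = ((a:ℂ) * fourier (-n) ((σ:ℝ) : AddCircle Δlam)) * F n := by
    intro s
    obtain ⟨a, ha, b, σ, hfe⟩ := key s
    refine ⟨a, ha, σ, fun n hn => ?_⟩
    have hTs : Continuous fun x : AddCircle Δlam => H (x - ((s:ℝ) : AddCircle Δlam)) :=
      Hcont.comp (continuous_id.sub continuous_const)
    have hTσ : Continuous fun x : AddCircle Δlam => H (x - ((σ:ℝ) : AddCircle Δlam)) :=
      Hcont.comp (continuous_id.sub continuous_const)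
    have hL : fourierCoeff (fun x => H x + H (x - ((s:ℝ) : AddCircle Δlam))) n
        = F n + fourier (-n) ((s:ℝ) : AddCircle Δlam) * F n := by
      rw [my_fourierCoeff_add _ _ Hcont hTs n, my_fourierCoeff_translate H _ n]
    have hR : fourierCoeff (fun x => (b:ℂ) + (a:ℂ) * H (x - ((σ:ℝ) : AddCircle Δlam))) n
        = (a:ℂ) * (fourier (-n) ((σ:ℝ) : AddCircle Δlam) * F n) := by
      rw [my_fourierCoeff_add (fun _ => (b:ℂ)) (fun x => (a:ℂ) * H (x - ((σ:ℝ) : AddCircle Δlam))) continuous_const (continuous_const.mul hTσ) n,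
        my_fourierCoeff_const _ hn, zero_add,
        fourierCoeff.const_mul (fun x => H (x - ((σ:ℝ) : AddCircle Δlam))) (a:ℂ) n,
        my_fourierCoeff_translate H _ n]
    have heq : fourierCoeff (fun x => H x + H (x - ((s:ℝ) : AddCircle Δlam))) n
        = fourierCoeff (fun x => (b:ℂ) + (a:ℂ) * H (x - ((σ:ℝ) : AddCircle Δlam))) n := by
      congr 1; funext x; exact hfe x
    rw [hL, hR] at heq
    rw [add_mul, one_mul]
    rw [heq]; ring
  have absRel : ∀ n : ℤ, n ≠ 0 → F n ≠ 0 → ∀ m : ℤ, m ≠ 0 → F m ≠ 0 → ∀ s : ℝ,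
      ‖1 + fourier (-n) ((s:ℝ) : AddCircle Δlam)‖
        = ‖1 + fourier (-m) ((s:ℝ) : AddCircle Δlam)‖ := by
    intro n hn hFn m hm hFm s
    obtain ⟨a, ha, σ, hrel⟩ := coeffRel s
    have e1 : (1 + fourier (-n) ((s:ℝ) : AddCircle Δlam))
        = (a:ℂ) * fourier (-n) ((σ:ℝ) : AddCircle Δlam) := mul_right_cancel₀ hFn (hrel n hn)
    have e2 : (1 + fourier (-m) ((s:ℝ) : AddCircle Δlam))
        = (a:ℂ) * fourier (-m) ((σ:ℝ) : AddCircle Δlam) := mul_right_cancel₀ hFm (hrel m hm)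
    have habs : ∀ k : ℤ, ∀ x : AddCircle Δlam, ‖fourier k x‖ = 1 := by
      intro k x
      rw [fourier_apply]
      exact Circle.norm_coe _
    rw [e1, e2, norm_mul, norm_mul, habs, habs]
  have cosRel : ∀ n : ℤ, n ≠ 0 → F n ≠ 0 → ∀ m : ℤ, m ≠ 0 → F m ≠ 0 →
      m = n ∨ m = -n := by
    intro n hn hFn m hm hFm
    refine my_cos_eq n m hn hm (fun θ => ?_)
    have := absRel n hn hFn m hm hFm (θ * Δlam / (2 * π))
    have hsq := congrArg (fun r : ℝ => r ^ 2) this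
    simp only [my_abs_sq] at hsq
    have hθn : 2 * π * n * (θ * Δlam / (2 * π)) / Δlam = n * θ := by
      field_simp
    have hθm : 2 * π * m * (θ * Δlam / (2 * π)) / Δlam = m * θ := by
      field_simp
    rw [hθn, hθm] at hsq
    linarith
  have hconj : ∀ n : ℤ, F (-n) = (starRingEnd ℂ) (F n) :=
    my_fourierCoeff_conj H (fun x => Complex.conj_ofReal _)
  by_cases hS : ∃ n : ℤ, n ≠ 0 ∧ F n ≠ 0
  · obtain ⟨n₁, hn₁, hFn₁⟩ := hS
    have hex : ∃ n₀ : ℤ, 0 < n₀ ∧ F n₀ ≠ 0 := by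
      rcases lt_or_gt_of_ne hn₁ with hlt | hgt
      · refine ⟨-n₁, by omega, ?_⟩
        rw [hconj n₁]
        simpa using hFn₁
      · exact ⟨n₁, hgt, hFn₁⟩
    obtain ⟨n₀, hn₀, hF₀⟩ := hex
    have hsupp : ∀ n ∉ ({-n₀, 0, n₀} : Finset ℤ), F n = 0 := by
      intro n hmem
      by_contra hFn
      simp only [Finset.mem_insert, Finset.mem_singleton] at hmem
      push_neg at hmem
      rcases cosRel n₀ hn₀.ne' hF₀ n hmem.2.1 hFn with rfl | rfl
      · exact hmem.2.2 rfl
      · exact hmem.1 rfl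
    have hsummable : Summable F := summable_of_ne_finset_zero hsupp
    set Hc : C(AddCircle Δlam, ℂ) := ⟨H, Hcont⟩ with hHc
    have hsum : ∀ x : AddCircle Δlam, HasSum (fun i => F i • fourier i x) (H x) := by
      intro x
      exact has_pointwise_sum_fourier_series_of_summable (f := Hc) hsummable x
    have hsum3 : ∀ x : AddCircle Δlam,
        H x = F (-n₀) * fourier (-n₀) x + (F 0 + F n₀ * fourier n₀ x) := by
      intro x
      have h1 := (hsum x).tsum_eq
      have h2 : ∑' i : ℤ, F i • fourier i x = ∑ i ∈ ({-n₀, 0, n₀} : Finset ℤ), F i • fourier i x := by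
        refine tsum_eq_sum (fun b hb => ?_)
        rw [hsupp b hb, zero_smul]
      rw [h2] at h1
      rw [← h1]
      rw [Finset.sum_insert (by simp; omega), Finset.sum_insert (by simp; omega),
        Finset.sum_singleton]
      simp [smul_eq_mul]
    set r : ℝ := ‖F n₀‖ with hr
    have hrpos : 0 < r := by
      rw [hr]
      exact norm_pos_iff.mpr hF₀
    set ψ : ℝ := Complex.arg (F n₀) with hψ
    set c₀ : ℝ := (F 0).re with hc₀
    have hF0 : F 0 = (c₀ : ℂ) := by
      have := hconj 0
      rw [neg_zero] at this
      exact (Complex.conj_eq_iff_re.mp this.symm).symm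
    have hform : ∀ lam : ℝ, h lam = c₀ + (2 * r) * Real.cos (2 * π * n₀ * lam / Δlam + ψ) := by
      intro lam
      have hz : F n₀ * fourier n₀ ((lam : ℝ) : AddCircle Δlam)
          = (r : ℂ) * Complex.exp (((2 * π * n₀ * lam / Δlam + ψ : ℝ) : ℂ) * Complex.I) := by
        rw [my_fourier_real, ← Complex.norm_mul_exp_arg_mul_I (F n₀), ← hr, ← hψ,
          mul_assoc, ← Complex.exp_add]
        congr 2
        push_cast
        ring
      have hzc : F (-n₀) * fourier (-n₀) ((lam : ℝ) : AddCircle Δlam)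
          = (starRingEnd ℂ) (F n₀ * fourier n₀ ((lam : ℝ) : AddCircle Δlam)) := by
        rw [hconj n₀, fourier_neg, map_mul]
      have hmain := hsum3 ((lam : ℝ) : AddCircle Δlam)
      rw [Hcoe, hzc, hz, hF0] at hmain
      have hre := congrArg Complex.re hmain
      simp only [Complex.ofReal_re, Complex.add_re, Complex.conj_re, Complex.mul_re,
        Complex.ofReal_im, Complex.exp_ofReal_mul_I_re, Complex.exp_ofReal_mul_I_im] at hre
      rw [hre]
      ring
    -- n₀ = 1
    obtain ⟨m, hm1, hm2⟩ := hmax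
    have hn0R : (0:ℝ) < (n₀ : ℝ) := by exact_mod_cast hn₀
    set lam₁ : ℝ := (-ψ) * Δlam / (2 * π * n₀) with hlam₁
    have hπ := Real.pi_pos
    have harg1 : 2 * π * n₀ * lam₁ / Δlam + ψ = 0 := by
      rw [hlam₁]
      field_simp
      ring
    have harg2 : 2 * π * n₀ * (lam₁ + Δlam / n₀) / Δlam + ψ = 2 * π := by
      rw [hlam₁]
      field_simp
      ring
    have hmaxval : ∀ x : ℝ, h x ≤ h lam₁ := by
      intro x
      rw [hform x, hform lam₁, harg1, Real.cos_zero]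
      have := Real.cos_le_one (2 * π * n₀ * x / Δlam + ψ)
      nlinarith
    have heq1 : h lam₁ = h m := le_antisymm (hm1 lam₁) (hmaxval m)
    have heq2 : h (lam₁ + Δlam / n₀) = h m := by
      rw [hform, harg2, ← heq1, hform lam₁, harg1, Real.cos_zero]
      rw [Real.cos_two_pi]
    obtain ⟨k₁, hk₁⟩ := hm2 lam₁ heq1
    obtain ⟨k₂, hk₂⟩ := hm2 (lam₁ + Δlam / n₀) heq2
    have hdiff : Δlam / n₀ = ((k₂ - k₁ : ℤ) : ℝ) * Δlam := by
      push_cast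
      linarith
    have hn1 : (n₀ : ℝ) * ((k₂ - k₁ : ℤ) : ℝ) = 1 := by
      have hne : (n₀:ℝ) ≠ 0 := ne_of_gt hn0R
      have h0 : Δlam / n₀ * n₀ = ((k₂ - k₁ : ℤ) : ℝ) * Δlam * n₀ := by rw [hdiff]
      rw [div_mul_cancel₀ _ hne] at h0
      have h1 := mul_left_cancel₀ (ne_of_gt hΔ)
        (show Δlam * ((n₀:ℝ) * ((k₂ - k₁ : ℤ) : ℝ)) = Δlam * 1 by linear_combination -h0)
      linarith
    have hn₀1 : n₀ = 1 := by
      have : (n₀ : ℤ) * (k₂ - k₁) = 1 := by exact_mod_cast hn1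
      rcases Int.mul_eq_one_iff_eq_one_or_neg_one.mp this with ⟨h1, _⟩ | ⟨h1, _⟩
      · exact h1
      · omega
    refine ⟨c₀, 2 * r, (-ψ) * Δlam / (2 * π), by linarith, fun lam => ?_⟩
    rw [hform lam, hn₀1]
    congr 2
    push_cast
    field_simp
    ring
  · -- no nonzero coefficient: h constant, contradiction with unique max
    push_neg at hS
    exfalso
    have hsummable : Summable F := summable_of_ne_finset_zero (s := {0})
      (fun b hb => hS b (by simpa using hb))
    set Hc : C(AddCircle Δlam, ℂ) := ⟨H, Hcont⟩ with hHc
    have hsum : ∀ x : AddCircle Δlam, HasSum (fun i => F i • fourier i x) (H x) :=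
      fun x => has_pointwise_sum_fourier_series_of_summable (f := Hc) hsummable x
    have hconst : ∀ lam : ℝ, h lam = h 0 := by
      intro lam
      have h1 := (hsum ((lam:ℝ) : AddCircle Δlam)).unique
        (hasSum_single 0 (fun b hb => by rw [hS b hb, zero_smul]))
      have h2 := (hsum ((0:ℝ) : AddCircle Δlam)).unique
        (hasSum_single 0 (fun b hb => by rw [hS b hb, zero_smul]))
      rw [Hcoe] at h1 h2
      simp only [fourier_zero, smul_eq_mul, mul_one] at h1 h2
      have : ((h lam : ℝ) : ℂ) = ((h 0 : ℝ) : ℂ) := by rw [h1, h2]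
      exact_mod_cast this
    obtain ⟨m, hm1, hm2⟩ := hmax
    have : h (m + Δlam / 2) = h m := by rw [hconst (m + Δlam / 2), hconst m]
    obtain ⟨k, hk⟩ := hm2 _ this
    have hk' : (2 * k : ℝ) = 1 := by
      have h2 : Δlam / 2 = k * Δlam := by linarith
      have h1 := mul_left_cancel₀ (ne_of_gt hΔ)
        (show Δlam * (2 * (k:ℝ)) = Δlam * 1 by linear_combination -2 * h2)
      linarith
    have : (2 * k : ℤ) = 1 := by exact_mod_cast hk'
    omega
end

section
/- Assume the spectral locus is convex. Then for every closed half-plane H of A (i.e. H = {x ∈ A : ℓ(x) ≤ t} for some linear functional ℓ on ℝ³ that is nonconstant on A and some t ∈ ℝ), the preimage η^{-1}(H) = {λ ∈ [0,1] : η(λ) ∈ H} is either empty, or all of [0,1], or a closed cyclic interval [a,b]_𝕋 for some a, b ∈ [0,1]. -/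
/-!
If the line `ℓ = t` passes through a point `c` of `int T`, then for `λ ∈ [0,1]`,
`ℓ (η λ) - t = ‖η λ - c‖ (ℓ u cos θ_c(λ) + ℓ v sin θ_c(λ))` with `‖η λ - c‖ > 0` because
`η λ ∈ ∂T`. A sinusoid cannot take the signs `≤ 0, > 0, ≤ 0, > 0` at four increasing arguments
spread over at most `2π`, and `θ_c` is monotone with variation at most `2π`; hence neither the
preimage nor its complement alternates along four increasing points of `[0,1]`. For a closed
subset of `[0,1]` this forces it to be empty, everything, or a cyclic interval. If the line misses
`int T`, an alternation at level `t` survives at a slightly higher level whose line meets `int T`.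
-/

open MeasureTheory Set Real

noncomputable section

/-- Closure relative to the affine hyperplane `A` (for subsets of `A`). -/
def closA (s : Set E3) : Set E3 :=
  {x | x ∈ planeA ∧ ∀ U : Set E3, IsOpen U → x ∈ U → (U ∩ planeA ∩ s).Nonempty}

/-- Boundary relative to the affine hyperplane `A` (for subsets of `A`). -/
def frontA (s : Set E3) : Set E3 := closA s \ intA s

/-- The color triangle `T = conv(η([0,1]))`. -/
def colorTri (η : ℝ → E3) : Set E3 := convexHull ℝ (η '' Icc 0 1)

/-- The cyclic interval `[a,b]_𝕋 ⊆ [0,1]`. -/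
def cycIcc (a b : ℝ) : Set ℝ := if a ≤ b then Icc a b else Icc a 1 ∪ Icc 0 b

/-- The color of a spectral density `f` w.r.t. the reference measure `mu`:
`c(f) = ∫_{[0,1]} f(λ) • η(λ) dμ̃(λ)`. -/
def colorOf (mu : Measure ℝ) (η : ℝ → E3) (f : ℝ → ℝ) : E3 :=
  ∫ lam in Icc (0:ℝ) 1, f lam • η lam ∂mu

/-- The spectral locus is convex: `η([0,1]) ⊆ ∂T` and from each interior point of `T` the locus
is seen under a continuous monotone angle `θ_c` with total variation at most `2π`, where the
angle is measured in the fixed orthonormal frame `(u, v)` of the direction plane of `A`. -/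
def IsConvexLocus (η : ℝ → E3) (u v : E3) : Prop :=
  η '' Icc 0 1 ⊆ frontA (colorTri η) ∧
  ∀ c ∈ intA (colorTri η), ∃ θ : ℝ → ℝ,
    ContinuousOn θ (Icc 0 1) ∧
    (MonotoneOn θ (Icc 0 1) ∨ AntitoneOn θ (Icc 0 1)) ∧
    |θ 1 - θ 0| ≤ 2 * π ∧
    ∀ lam ∈ Icc (0:ℝ) 1,
      η lam - c = ‖η lam - c‖ • (Real.cos (θ lam) • u + Real.sin (θ lam) • v)

/-- The spectral locus is strictly convex: convex, and moreover `η(λ)` does not lie on the chord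
`[η(a), η(b)]` for pairwise distinct `a, b, λ ∈ [0,1]`. -/
def IsStrictConvexLocus (η : ℝ → E3) (u v : E3) : Prop :=
  IsConvexLocus η u v ∧
  ∀ a ∈ Icc (0:ℝ) 1, ∀ b ∈ Icc (0:ℝ) 1, ∀ lam ∈ Icc (0:ℝ) 1,
    a ≠ b → b ≠ lam → a ≠ lam → η lam ∉ segment ℝ (η a) (η b)

lemma exists_abs_sub_int_mul_two_pi_lt_of_cos_pos {x : ℝ} (hx : 0 < cos x) :
    ∃ k : ℤ, |x - k * (2 * π)| < π / 2 := by
  obtain ⟨k, hk⟩ :=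
    Real.Angle.angle_eq_iff_two_pi_dvd_sub.1 (Real.Angle.coe_toReal (x : Real.Angle)).symm
  refine ⟨k, ?_⟩
  have h : x - k * (2 * π) = (x : Real.Angle).toReal := by linarith
  rw [h, ← Real.Angle.cos_pos_iff_abs_toReal_lt_pi_div_two, Real.Angle.cos_coe]
  exact hx

lemma cos_nonpos_of_alternating {x₁ x₂ x₃ x₄ : ℝ} (h₁₂ : x₁ ≤ x₂) (h₂₃ : x₂ ≤ x₃) (h₃₄ : x₃ ≤ x₄)
    (h₄₁ : x₄ ≤ x₁ + 2 * π) (h₁ : cos x₁ ≤ 0) (h₂ : 0 < cos x₂) (h₃ : cos x₃ ≤ 0) :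
    cos x₄ ≤ 0 := by
  obtain ⟨k, hk⟩ := exists_abs_sub_int_mul_two_pi_lt_of_cos_pos h₂
  rw [abs_lt] at hk
  rw [← cos_sub_int_mul_two_pi _ k] at h₁ h₃ ⊢
  have hx₁ : x₁ - k * (2 * π) ≤ -(π / 2) := by
    by_contra h
    exact h₁.not_gt (cos_pos_of_mem_Ioo ⟨by linarith, by linarith⟩)
  have hx₃ : π / 2 ≤ x₃ - k * (2 * π) := by
    by_contra h
    exact h₃.not_gt (cos_pos_of_mem_Ioo ⟨by linarith, by linarith⟩)
  exact cos_nonpos_of_pi_div_two_le_of_le (by linarith) (by linarith)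

lemma exists_mul_cos_sub_eq (α β : ℝ) :
    ∃ γ φ : ℝ, 0 ≤ γ ∧ ∀ x, α * cos x + β * sin x = γ * cos (x - φ) := by
  set z : ℂ := ⟨α, β⟩
  refine ⟨‖z‖, z.arg, norm_nonneg z, fun x => ?_⟩
  have hα : ‖z‖ * cos z.arg = α := Complex.norm_mul_cos_arg z
  have hβ : ‖z‖ * sin z.arg = β := Complex.norm_mul_sin_arg z
  rw [cos_sub]
  linear_combination -cos x * hα - sin x * hβ

lemma harmonic_nonpos_of_alternating (α β : ℝ) {x₁ x₂ x₃ x₄ : ℝ} (h₁₂ : x₁ ≤ x₂) (h₂₃ : x₂ ≤ x₃)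
    (h₃₄ : x₃ ≤ x₄) (h₄₁ : x₄ ≤ x₁ + 2 * π) (h₁ : α * cos x₁ + β * sin x₁ ≤ 0)
    (h₂ : 0 < α * cos x₂ + β * sin x₂) (h₃ : α * cos x₃ + β * sin x₃ ≤ 0) :
    α * cos x₄ + β * sin x₄ ≤ 0 := by
  obtain ⟨γ, φ, hγ, hg⟩ := exists_mul_cos_sub_eq α β
  simp only [hg] at *
  have hγ : 0 < γ := hγ.lt_of_ne (by rintro rfl; simp at h₂)
  exact mul_nonpos_of_nonneg_of_nonpos hγ.le <| cos_nonpos_of_alternating (x₁ := x₁ - φ)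
    (by linarith) (by linarith) (by linarith) (by linarith) (nonpos_of_mul_nonpos_right h₁ hγ)
    (pos_of_mul_pos_right h₂ hγ.le) (nonpos_of_mul_nonpos_right h₃ hγ)

lemma harmonic_nonpos_of_alternating_rev (α β : ℝ) {x₁ x₂ x₃ x₄ : ℝ} (h₁₂ : x₁ ≤ x₂)
    (h₂₃ : x₂ ≤ x₃) (h₃₄ : x₃ ≤ x₄) (h₄₁ : x₄ ≤ x₁ + 2 * π) (h₂ : α * cos x₂ + β * sin x₂ ≤ 0)
    (h₃ : 0 < α * cos x₃ + β * sin x₃) (h₄ : α * cos x₄ + β * sin x₄ ≤ 0) :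
    α * cos x₁ + β * sin x₁ ≤ 0 := by
  have h := harmonic_nonpos_of_alternating α (-β) (x₁ := -x₄) (x₂ := -x₃) (x₃ := -x₂) (x₄ := -x₁)
    (by linarith) (by linarith) (by linarith) (by linarith)
  simp only [cos_neg, sin_neg, neg_mul_neg] at h
  exact h h₄ h₃ h₂

def Alternates (s : Set ℝ) : Prop :=
  ∃ a b c d : ℝ, 0 ≤ a ∧ a ≤ b ∧ b ≤ c ∧ c ≤ d ∧ d ≤ 1 ∧ a ∈ s ∧ b ∉ s ∧ c ∈ s ∧ d ∉ s

lemma not_alternates_of_monotoneOn {θ : ℝ → ℝ} (hθ : MonotoneOn θ (Icc 0 1))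
    (h2π : θ 1 ≤ θ 0 + 2 * π) (α β : ℝ) {s : Set ℝ}
    (hs : ∀ x ∈ Icc (0:ℝ) 1, x ∈ s ↔ α * cos (θ x) + β * sin (θ x) ≤ 0) :
    ¬Alternates s ∧ ¬Alternates sᶜ := by
  have hwidth : ∀ x ∈ Icc (0:ℝ) 1, ∀ y ∈ Icc (0:ℝ) 1, θ y ≤ θ x + 2 * π := fun x hx y hy => by
    linarith [hθ (left_mem_Icc.2 zero_le_one) hx hx.1, hθ hy (right_mem_Icc.2 zero_le_one) hy.2]
  constructor <;> rintro ⟨a, b, c, d, h0a, hab, hbc, hcd, hd1, ha, hb, hc, hd⟩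
  all_goals
    have ha' : a ∈ Icc (0:ℝ) 1 := ⟨h0a, by linarith⟩
    have hb' : b ∈ Icc (0:ℝ) 1 := ⟨by linarith, by linarith⟩
    have hc' : c ∈ Icc (0:ℝ) 1 := ⟨by linarith, by linarith⟩
    have hd' : d ∈ Icc (0:ℝ) 1 := ⟨by linarith, hd1⟩
    simp only [mem_compl_iff, hs a ha', hs b hb', hs c hc', hs d hd', not_le, not_lt] at ha hb hc hd
  · exact hd.not_ge <| harmonic_nonpos_of_alternating α β (hθ ha' hb' hab) (hθ hb' hc' hbc)
      (hθ hc' hd' hcd) (hwidth a ha' d hd') ha hb hc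
  · exact ha.not_ge <| harmonic_nonpos_of_alternating_rev α β (hθ ha' hb' hab) (hθ hb' hc' hbc)
      (hθ hc' hd' hcd) (hwidth a ha' d hd') hb hc hd

lemma not_alternates_of_monotoneOn_or_antitoneOn {θ : ℝ → ℝ}
    (hθ : MonotoneOn θ (Icc 0 1) ∨ AntitoneOn θ (Icc 0 1)) (h2π : |θ 1 - θ 0| ≤ 2 * π)
    (α β : ℝ) {s : Set ℝ}
    (hs : ∀ x ∈ Icc (0:ℝ) 1, x ∈ s ↔ α * cos (θ x) + β * sin (θ x) ≤ 0) :
    ¬Alternates s ∧ ¬Alternates sᶜ := by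
  rcases hθ with hθ | hθ
  · exact not_alternates_of_monotoneOn hθ (by linarith [le_abs_self (θ 1 - θ 0)]) α β hs
  · refine not_alternates_of_monotoneOn (θ := fun x => -θ x) hθ.neg
      (by linarith [neg_abs_le (θ 1 - θ 0)]) α (-β) fun x hx => ?_
    simp only [hs x hx, cos_neg, sin_neg, neg_mul_neg]

lemma convex_planeA : Convex ℝ planeA := fun x hx y hy a b _ _ hab => by
  simp only [planeA, mem_ofPred_eq, PiLp.add_apply, PiLp.smul_apply, smul_eq_mul] at *
  linear_combination a * hx + b * hy + hab

lemma lineMap_mem_planeA {x y : E3} (hx : x ∈ planeA) (hy : y ∈ planeA) (r : ℝ) :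
    AffineMap.lineMap x y r ∈ planeA := by
  simp only [planeA, mem_ofPred_eq, AffineMap.lineMap_apply_module, PiLp.add_apply,
    PiLp.smul_apply, smul_eq_mul] at *
  linear_combination (1 - r) * hx + r * hy

lemma lineMap_mem_intA {s : Set E3} (hs : Convex ℝ s) (hsA : s ⊆ planeA) {x c : E3} (hx : x ∈ s)
    (hc : c ∈ intA s) {r : ℝ} (hr₀ : 0 < r) (hr₁ : r ≤ 1) : AffineMap.lineMap x c r ∈ intA s := by
  obtain ⟨hcA, U, hU, hcU, hUs⟩ := hc
  have hxA := hsA hx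
  -- the homothety with centre `x` and ratio `r⁻¹` maps a neighbourhood of `lineMap x c r` to `U`
  refine ⟨lineMap_mem_planeA hxA hcA r, (fun q => AffineMap.lineMap x q r⁻¹) ⁻¹' U,
    hU.preimage (by fun_prop), ?_, fun q ⟨hqU, hqA⟩ => ?_⟩
  · rwa [mem_preimage, AffineMap.lineMap_lineMap_right, inv_mul_cancel₀ hr₀.ne',
      AffineMap.lineMap_apply_one]
  · have hq : q = AffineMap.lineMap x (AffineMap.lineMap x q r⁻¹) r := by
      rw [AffineMap.lineMap_lineMap_right, mul_inv_cancel₀ hr₀.ne', AffineMap.lineMap_apply_one]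
    rw [hq]
    exact hs.lineMap_mem hx (hUs ⟨hqU, lineMap_mem_planeA hxA hqA _⟩) ⟨hr₀.le, hr₁⟩

lemma mem_image_intA_of_mem_uIcc {s : Set E3} (hs : Convex ℝ s) (hsA : s ⊆ planeA) {x c : E3}
    (hx : x ∈ s) (hc : c ∈ intA s) (ℓ : E3 →ₗ[ℝ] ℝ) {t : ℝ} (ht : t ∈ uIcc (ℓ x) (ℓ c))
    (htx : t ≠ ℓ x) : t ∈ ℓ '' intA s := by
  rw [← segment_eq_uIcc, segment_eq_image_lineMap] at ht
  obtain ⟨r, ⟨hr₀, hr₁⟩, rfl⟩ := ht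
  have hr₀ : 0 < r := hr₀.lt_of_ne (by rintro rfl; simp at htx)
  refine ⟨AffineMap.lineMap x c r, lineMap_mem_intA hs hsA hx hc hr₀ hr₁, ?_⟩
  simp only [AffineMap.lineMap_apply_module, map_add, map_smul, smul_eq_mul]

lemma Ioo_subset_image_intA {s : Set E3} (hs : Convex ℝ s) (hsA : s ⊆ planeA)
    (hne : (intA s).Nonempty) (ℓ : E3 →ₗ[ℝ] ℝ) {x y : E3} (hx : x ∈ s) (hy : y ∈ s) :
    Ioo (ℓ x) (ℓ y) ⊆ ℓ '' intA s := by
  obtain ⟨c, hc⟩ := hne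
  rintro t ⟨hxt, hty⟩
  rcases le_or_gt t (ℓ c) with htc | hct
  · exact mem_image_intA_of_mem_uIcc hs hsA hx hc ℓ (Icc_subset_uIcc ⟨hxt.le, htc⟩) hxt.ne'
  · exact mem_image_intA_of_mem_uIcc hs hsA hy hc ℓ (Icc_subset_uIcc' ⟨hct.le, hty.le⟩) hty.ne

lemma IsConvexLocus.not_alternates {η : ℝ → E3} {u v : E3} (hconv : IsConvexLocus η u v)
    {c : E3} (hc : c ∈ intA (colorTri η)) (ℓ : E3 →ₗ[ℝ] ℝ) :
    ¬Alternates {x | ℓ (η x) ≤ ℓ c} ∧ ¬Alternates {x | ℓ (η x) ≤ ℓ c}ᶜ := by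
  obtain ⟨θ, -, hθ, h2π, hpolar⟩ := hconv.2 c hc
  refine not_alternates_of_monotoneOn_or_antitoneOn hθ h2π (ℓ u) (ℓ v) fun x hx => ?_
  have hne : η x ≠ c := fun h => (hconv.1 ⟨x, hx, rfl⟩).2 (h ▸ hc)
  have hR : 0 < ‖η x - c‖ := norm_pos_iff.2 (sub_ne_zero.2 hne)
  have hsub : ℓ (η x) - ℓ c = ‖η x - c‖ * (ℓ u * cos (θ x) + ℓ v * sin (θ x)) := by
    have h := congrArg ℓ (hpolar x hx)
    simp only [map_sub, map_smul, map_add, smul_eq_mul] at h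
    linear_combination h
  rw [mem_ofPred_eq, ← sub_nonpos, hsub]
  exact ⟨fun h => nonpos_of_mul_nonpos_right h hR, mul_nonpos_of_nonneg_of_nonpos hR.le⟩

lemma colorTri_subset_planeA {η : ℝ → E3} (hηA : ∀ x ∈ Icc (0:ℝ) 1, η x ∈ planeA) :
    colorTri η ⊆ planeA :=
  convexHull_min (by rintro _ ⟨x, hx, rfl⟩; exact hηA x hx) convex_planeA

lemma IsConvexLocus.not_alternates_sublevel {η : ℝ → E3} {u v : E3}
    (hconv : IsConvexLocus η u v) (hηA : ∀ x ∈ Icc (0:ℝ) 1, η x ∈ planeA)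
    (hTint : (intA (colorTri η)).Nonempty) (ℓ : E3 →ₗ[ℝ] ℝ) (t : ℝ) :
    ¬Alternates {x | ℓ (η x) ≤ t} ∧ ¬Alternates {x | ℓ (η x) ≤ t}ᶜ := by
  -- raising the level slightly keeps an alternation and moves the line into the interior of `T`
  have raise : ∀ a b c d, a ∈ Icc (0:ℝ) 1 → b ∈ Icc (0:ℝ) 1 → ℓ (η a) ≤ t → ℓ (η c) ≤ t →
      t < ℓ (η b) → t < ℓ (η d) → ∃ c' ∈ intA (colorTri η),
        ℓ (η a) ≤ ℓ c' ∧ ℓ (η c) ≤ ℓ c' ∧ ℓ c' < ℓ (η b) ∧ ℓ c' < ℓ (η d) := by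
    intro a b c d ha hb hat hct htb htd
    have hmem : (t + min (ℓ (η b)) (ℓ (η d))) / 2 ∈ Ioo (ℓ (η a)) (ℓ (η b)) := by
      constructor <;> linarith [min_le_left (ℓ (η b)) (ℓ (η d)), lt_min htb htd]
    obtain ⟨c', hc', hc'eq⟩ := Ioo_subset_image_intA (convex_convexHull ℝ _)
      (colorTri_subset_planeA hηA) hTint ℓ (subset_convexHull ℝ _ ⟨a, ha, rfl⟩)
      (subset_convexHull ℝ _ ⟨b, hb, rfl⟩) hmem
    refine ⟨c', hc', ?_, ?_, ?_, ?_⟩ <;>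
      linarith [min_le_left (ℓ (η b)) (ℓ (η d)), min_le_right (ℓ (η b)) (ℓ (η d)), lt_min htb htd]
  constructor <;> rintro ⟨a, b, c, d, h0a, hab, hbc, hcd, hd1, ha, hb, hc, hd⟩ <;>
    simp only [mem_compl_iff, mem_ofPred_eq, not_le, not_lt] at ha hb hc hd
  · obtain ⟨c', hc', h₁, h₂, h₃, h₄⟩ := raise a b c d ⟨h0a, by linarith⟩ ⟨by linarith, by linarith⟩
      ha hc hb hd
    exact (hconv.not_alternates hc' ℓ).1
      ⟨a, b, c, d, h0a, hab, hbc, hcd, hd1, h₁, h₃.not_ge, h₂, h₄.not_ge⟩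
  · obtain ⟨c', hc', h₁, h₂, h₃, h₄⟩ := raise b a d c ⟨by linarith, by linarith⟩ ⟨h0a, by linarith⟩
      hb hd ha hc
    exact (hconv.not_alternates hc' ℓ).2
      ⟨a, b, c, d, h0a, hab, hbc, hcd, hd1, h₃.not_ge, not_not.2 h₁, h₄.not_ge, not_not.2 h₂⟩

lemma ordConnected_inter_of_not_alternates {s : Set ℝ} (h : ¬Alternates s)
    (h' : ¬Alternates sᶜ) (hends : 0 ∉ s ∨ 1 ∉ s) : (Icc 0 1 ∩ s).OrdConnected := by
  refine ⟨fun x hx z hz y hy => ⟨⟨hx.1.1.trans hy.1, hy.2.trans hz.1.2⟩, ?_⟩⟩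
  by_contra hys
  rcases hends with h0 | h1
  · exact h' ⟨0, x, y, z, le_rfl, hx.1.1, hy.1, hy.2, hz.1.2, h0, not_not.2 hx.2, hys,
      not_not.2 hz.2⟩
  · exact h ⟨x, y, z, 1, hx.1.1, hy.1, hy.2, hz.1.2, le_rfl, hx.2, hys, hz.2, h1⟩

lemma exists_eq_cycIcc_of_isClosed_of_ordConnected {C : Set ℝ} (hC : C.Nonempty)
    (hCI : C ⊆ Icc 0 1) (hcl : IsClosed C) (hoc : C.OrdConnected) :
    ∃ a ∈ Icc (0:ℝ) 1, ∃ b ∈ Icc (0:ℝ) 1, C = cycIcc a b := by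
  have hbdd : BddBelow C := bddBelow_Icc.mono hCI
  have hbdd' : BddAbove C := bddAbove_Icc.mono hCI
  refine ⟨sInf C, hCI (hcl.csInf_mem hC hbdd), sSup C, hCI (hcl.csSup_mem hC hbdd'), ?_⟩
  rw [cycIcc, if_pos (csInf_le_csSup hC hbdd hbdd')]
  exact eq_Icc_csInf_csSup_of_connected_bdd_closed ⟨hC, hoc.isPreconnected⟩ hbdd hbdd' hcl

lemma exists_eq_cycIcc_of_not_alternates {s : Set ℝ} (hcl : IsClosed (Icc 0 1 ∩ s))
    (h : ¬Alternates s) (h' : ¬Alternates sᶜ) (h0 : (0:ℝ) ∈ s) (h1 : (1:ℝ) ∈ s) {d : ℝ}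
    (hd : d ∈ Icc (0:ℝ) 1) (hds : d ∉ s) :
    ∃ a ∈ Icc (0:ℝ) 1, ∃ b ∈ Icc (0:ℝ) 1, Icc 0 1 ∩ s = cycIcc a b := by
  set C := Icc 0 1 ∩ s
  have hbdd : BddAbove (Icc 0 d ∩ C) := bddAbove_Icc.mono inter_subset_left
  have hbdd' : BddBelow (Icc d 1 ∩ C) := bddBelow_Icc.mono inter_subset_left
  have hp := (isClosed_Icc.inter hcl).csSup_mem ⟨0, ⟨le_rfl, hd.1⟩, ⟨le_rfl, zero_le_one⟩, h0⟩ hbdd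
  have hq := (isClosed_Icc.inter hcl).csInf_mem ⟨1, ⟨hd.2, le_rfl⟩, ⟨zero_le_one, le_rfl⟩, h1⟩ hbdd'
  set p := sSup (Icc 0 d ∩ C)
  set q := sInf (Icc d 1 ∩ C)
  have hpd : p < d := hp.1.2.lt_of_ne fun hpd => hds (hpd ▸ hp.2.2)
  have hdq : d < q := hq.1.1.lt_of_ne fun hdq => hds (hdq ▸ hq.2.2)
  refine ⟨q, hq.2.1, p, hp.2.1, ?_⟩
  rw [cycIcc, if_neg (by linarith)]
  ext x
  constructor
  · rintro ⟨hx, hxs⟩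
    rcases le_total x d with hxd | hdx
    · exact Or.inr ⟨hx.1, le_csSup hbdd ⟨⟨hx.1, hxd⟩, hx, hxs⟩⟩
    · exact Or.inl ⟨csInf_le hbdd' ⟨⟨hdx, hx.2⟩, hx, hxs⟩, hx.2⟩
  · rintro (⟨hqx, hx1⟩ | ⟨h0x, hxp⟩)
    · refine ⟨⟨by linarith [hd.1], hx1⟩, by_contra fun hxs => h' ?_⟩
      exact ⟨d, q, x, 1, hd.1, hdq.le, hqx, hx1, le_rfl, hds, not_not.2 hq.2.2, hxs, not_not.2 h1⟩
    · refine ⟨⟨h0x, by linarith [hd.2]⟩, by_contra fun hxs => h ?_⟩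
      exact ⟨0, x, p, d, le_rfl, h0x, hxp, hpd.le, hd.2, h0, hxs, hp.2.2, hds⟩

lemma eq_empty_or_eq_Icc_or_eq_cycIcc_of_not_alternates {s : Set ℝ}
    (hcl : IsClosed (Icc 0 1 ∩ s)) (h : ¬Alternates s) (h' : ¬Alternates sᶜ) :
    Icc 0 1 ∩ s = ∅ ∨ Icc 0 1 ∩ s = Icc 0 1 ∨
      ∃ a ∈ Icc (0:ℝ) 1, ∃ b ∈ Icc (0:ℝ) 1, Icc 0 1 ∩ s = cycIcc a b := by
  by_cases hends : 0 ∈ s ∧ 1 ∈ s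
  · by_cases hfull : Icc 0 1 ⊆ s
    · exact Or.inr (Or.inl (inter_eq_left.2 hfull))
    obtain ⟨d, hd, hds⟩ := not_subset.1 hfull
    exact Or.inr (Or.inr (exists_eq_cycIcc_of_not_alternates hcl h h' hends.1 hends.2 hd hds))
  · rcases (Icc 0 1 ∩ s).eq_empty_or_nonempty with hC | hC
    · exact Or.inl hC
    exact Or.inr <| Or.inr <| exists_eq_cycIcc_of_isClosed_of_ordConnected hC inter_subset_left hcl
      (ordConnected_inter_of_not_alternates h h' (not_and_or.1 hends))

theorem halfplane_preimage_is_cyclic_interval_general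
    (η : ℝ → E3) (hηcont : ContinuousOn η (Icc 0 1))
    (hηΔ : ∀ lam ∈ Icc (0:ℝ) 1, η lam ∈ simplex2)
    (u v : E3)
    (hTint : (intA (colorTri η)).Nonempty)
    (hconv : IsConvexLocus η u v)
    (ℓ : E3 →ₗ[ℝ] ℝ) (t : ℝ) :
    {lam ∈ Icc (0:ℝ) 1 | η lam ∈ planeA ∧ ℓ (η lam) ≤ t} = ∅ ∨
    {lam ∈ Icc (0:ℝ) 1 | η lam ∈ planeA ∧ ℓ (η lam) ≤ t} = Icc (0:ℝ) 1 ∨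
    ∃ a ∈ Icc (0:ℝ) 1, ∃ b ∈ Icc (0:ℝ) 1,
      {lam ∈ Icc (0:ℝ) 1 | η lam ∈ planeA ∧ ℓ (η lam) ≤ t} = cycIcc a b := by
  have hηA : ∀ lam ∈ Icc (0:ℝ) 1, η lam ∈ planeA := fun lam hlam => (hηΔ lam hlam).2
  have hset : {lam ∈ Icc (0:ℝ) 1 | η lam ∈ planeA ∧ ℓ (η lam) ≤ t} =
      Icc 0 1 ∩ {lam | ℓ (η lam) ≤ t} :=
    Set.ext fun lam => ⟨fun h => ⟨h.1, h.2.2⟩, fun h => ⟨h.1, hηA lam h.1, h.2⟩⟩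
  have hcl : IsClosed (Icc 0 1 ∩ {lam | ℓ (η lam) ≤ t}) :=
    (ℓ.continuous_of_finiteDimensional.comp_continuousOn hηcont).preimage_isClosed_of_isClosed
      isClosed_Icc isClosed_Iic
  obtain ⟨h, h'⟩ := hconv.not_alternates_sublevel hηA hTint ℓ t
  rw [hset]
  exact eq_empty_or_eq_Icc_or_eq_cycIcc_of_not_alternates hcl h h'

/-- if the spectral locus is convex, the preimage under `η` of any closed
half-plane of `A` is empty, everything, or a closed cyclic interval. -/
theorem halfplane_preimage_is_cyclic_interval
    (η : ℝ → E3) (hηcont : ContinuousOn η (Icc 0 1))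
    (hηΔ : ∀ lam ∈ Icc (0:ℝ) 1, η lam ∈ simplex2)
    (u v : E3) (hu : ‖u‖ = 1) (hv : ‖v‖ = 1) (huv : (inner ℝ u v : ℝ) = 0)
    (hu0 : u 0 + u 1 + u 2 = 0) (hv0 : v 0 + v 1 + v 2 = 0)
    (hTint : (intA (colorTri η)).Nonempty)
    (hconv : IsConvexLocus η u v)
    (ℓ : E3 →ₗ[ℝ] ℝ) (hℓ : ∃ x ∈ planeA, ∃ y ∈ planeA, ℓ x ≠ ℓ y) (t : ℝ) :
    {lam ∈ Icc (0:ℝ) 1 | η lam ∈ planeA ∧ ℓ (η lam) ≤ t} = ∅ ∨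
    {lam ∈ Icc (0:ℝ) 1 | η lam ∈ planeA ∧ ℓ (η lam) ≤ t} = Icc (0:ℝ) 1 ∨
    ∃ a ∈ Icc (0:ℝ) 1, ∃ b ∈ Icc (0:ℝ) 1,
      {lam ∈ Icc (0:ℝ) 1 | η lam ∈ planeA ∧ ℓ (η lam) ≤ t} = cycIcc a b :=
  halfplane_preimage_is_cyclic_interval_general η hηcont hηΔ u v hTint hconv ℓ t
end
end

section
/- Assume the spectral locus is convex. Then for all 0 ≤ a < b ≤ 1, conv(η([a,b])) ∩ conv(η([b,1] ∪ [0,a])) = [η(a), η(b)], where [η(a), η(b)] denotes the line segment joining η(a) and η(b) in ℝ³. -/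
open MeasureTheory Set Real

noncomputable section

/-!
In the chart `z ↦ c + (re z) • u + (im z) • v` of the plane `A` around an interior point `c` of
`T`, the locus reads `Z t = r t * exp (θ t * I)` with `θ` monotone (after reversing the
parameter if necessary). The arc over `[a, b]` then lies in the angular sector from `θ a` to
`θ b`, the complementary arc in the sector from `θ b` to `θ a + 2π`, and all these points lie
on the boundary of the convex set `T`. If `θ b - θ a < π`, the line through `Z a` and `Z b`
separates the two arcs: a boundary point inside the angle `Z a, 0, Z b` lies beyond the line,
and on it only within the chord, while a point of `T` outside that angle lies on the side of
`0`. The case `θ b - θ a > π` is the same with the arcs exchanged; if `θ b - θ a = π` the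
separating line passes through `0`, and if it is `0` or `2π` one of the arcs is a single point.
So the two hulls meet only in the chord.
-/
open Complex

attribute [local instance] Complex.finrank_real_complex_fact

local notation "ω" => Complex.orientation.areaForm

section ConvexInterior

variable {E : Type*} [AddCommGroup E] [Module ℝ E] [TopologicalSpace E] [IsTopologicalAddGroup E]
  [ContinuousSMul ℝ E] {T : Set E}

theorem Convex.smul_mem_interior_of_zero_mem_interior (hT : Convex ℝ T) (h0 : 0 ∈ interior T)
    {y : E} (hy : y ∈ T) {s : ℝ} (hs0 : 0 ≤ s) (hs1 : s < 1) : s • y ∈ interior T := by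
  simpa using hT.combo_interior_self_mem_interior h0 hy (sub_pos.2 hs1) hs0 (by ring)

theorem Convex.smul_add_smul_mem_interior_of_zero_mem_interior (hT : Convex ℝ T)
    (h0 : 0 ∈ interior T) {x y : E} (hx : x ∈ T) (hy : y ∈ T) {a b : ℝ} (ha : 0 ≤ a) (hb : 0 ≤ b)
    (hab : a + b < 1) : a • x + b • y ∈ interior T := by
  have h1a : 0 < 1 - a := by linarith
  have hz : (b / (1 - a)) • y ∈ interior T :=
    hT.smul_mem_interior_of_zero_mem_interior h0 hy (by positivity)
      ((div_lt_one h1a).2 (by linarith))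
  convert hT.combo_self_interior_mem_interior hx hz ha h1a (by ring) using 2
  rw [smul_smul, mul_div_cancel₀ _ h1a.ne']

/-- The hypotheses say that `x` lies on the segment from `w` to `y`, with positive weight on
`w`. -/
theorem Convex.mem_interior_of_smul_eq (hT : Convex ℝ T) {w x y : E} (hw : w ∈ interior T)
    (hy : y ∈ T) {a b : ℝ} (hab : 0 < a + b) (hb : b ≤ 0) (h : (a + b) • w = a • x + b • y) :
    x ∈ interior T := by
  have ha : 0 < a := by linarith
  convert hT.combo_interior_self_mem_interior hw hy (div_pos hab ha)
    (div_nonneg (neg_nonneg.2 hb) ha.le) (by field_simp; ring) using 1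
  rw [div_eq_inv_mul, div_eq_inv_mul, mul_smul, mul_smul, h, neg_smul, ← smul_add,
    add_neg_cancel_right, smul_smul, inv_mul_cancel₀ ha.ne', one_smul]

end ConvexInterior

section Separation

variable {E : Type*} [AddCommGroup E] [Module ℝ E]

theorem convex_setOf_le_and_eq_imp_mem {S : Set E} (hS : Convex ℝ S) (l : E →ₗ[ℝ] ℝ) (k : ℝ) :
    Convex ℝ {z | k ≤ l z ∧ (l z = k → z ∈ S)} := by
  refine convex_iff_forall_pos.2 fun x ⟨hx, hxS⟩ y ⟨hy, hyS⟩ a b ha hb hab => ?_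
  have hl : l (a • x + b • y) = a * l x + b * l y := by simp
  refine ⟨?_, fun hk => ?_⟩
  · calc k = a * k + b * k := by linear_combination (-k) * hab
      _ ≤ l (a • x + b • y) := by
        rw [hl]; exact add_le_add (mul_le_mul_of_nonneg_left hx ha.le)
          (mul_le_mul_of_nonneg_left hy hb.le)
  obtain ⟨hxk, hyk⟩ := (add_eq_zero_iff_of_nonneg (mul_nonneg ha.le (sub_nonneg.2 hx))
    (mul_nonneg hb.le (sub_nonneg.2 hy))).1 (by linear_combination hl.symm.trans hk - k * hab)
  rw [mul_eq_zero, sub_eq_zero] at hxk hyk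
  exact hS (hxS (hxk.resolve_left ha.ne')) (hyS (hyk.resolve_left hb.ne')) ha.le hb.le hab

theorem convexHull_inter_subset_of_separates {A B S : Set E} (hS : Convex ℝ S) (l : E →ₗ[ℝ] ℝ)
    (k : ℝ) (hA : ∀ z ∈ A, k ≤ l z ∧ (l z = k → z ∈ S)) (hB : ∀ z ∈ B, l z ≤ k) :
    convexHull ℝ A ∩ convexHull ℝ B ⊆ S := by
  rintro x ⟨hxA, hxB⟩
  have hx := convexHull_min hA (convex_setOf_le_and_eq_imp_mem hS l k) hxA
  exact hx.2 (le_antisymm (convexHull_min hB (convex_halfSpace_le l.isLinear k) hxB) hx.1)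

end Separation

section AreaForm

theorem areaForm_smul_eq (P Q X : ℂ) : ω P Q • X = ω X Q • P + ω P X • Q := by
  apply Complex.ext <;>
    simp only [Complex.areaForm, mul_im, mul_re, conj_re, conj_im, real_smul, add_re, add_im,
      ofReal_re, ofReal_im] <;> ring

theorem areaForm_polar (x y α β : ℝ) :
    ω (x * cexp (α * I)) (y * cexp (β * I)) = x * y * Real.sin (β - α) := by
  simp only [Complex.areaForm, map_mul, conj_ofReal, mul_im, mul_re, ofReal_re, ofReal_im, conj_re,
    conj_im, exp_ofReal_mul_I_re, exp_ofReal_mul_I_im, Real.sin_sub]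
  ring

theorem areaForm_sub_apply (P Q X : ℂ) : ω (P - Q) X = ω X Q + ω P X := by
  rw [map_sub, LinearMap.sub_apply, Complex.orientation.areaForm_swap Q X]; ring

variable {T : Set ℂ} {P Q X : ℂ}

/-- A point of `T \ interior T` seen from `0` inside the angle `POQ` lies beyond the line `PQ`,
and on that line only within `[P, Q]`: its weights in Cramer's formula `areaForm_smul_eq` sum
to at least `1`, as otherwise it would be interior. -/
theorem le_areaForm_of_mem_cone (hT : Convex ℝ T) (h0 : 0 ∈ interior T) (hP : P ∈ T)
    (hQ : Q ∈ T) (hPQ : 0 < ω P Q) (hX : X ∉ interior T) (hPX : 0 ≤ ω P X) (hXQ : 0 ≤ ω X Q) :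
    ω P Q ≤ ω (P - Q) X ∧ (ω (P - Q) X = ω P Q → X ∈ segment ℝ P Q) := by
  have hX' : X = (ω X Q / ω P Q) • P + (ω P X / ω P Q) • Q := by
    rw [div_eq_inv_mul, div_eq_inv_mul, mul_smul, mul_smul, ← smul_add, ← areaForm_smul_eq,
      smul_smul, inv_mul_cancel₀ hPQ.ne', one_smul]
  rw [areaForm_sub_apply]
  refine ⟨not_lt.1 fun hlt => hX ?_, fun heq => ?_⟩
  · rw [hX']
    exact hT.smul_add_smul_mem_interior_of_zero_mem_interior h0 hP hQ (by positivity)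
      (by positivity) (by rw [← add_div, div_lt_one hPQ]; linarith)
  · exact ⟨_, _, by positivity, by positivity, by rw [← add_div, heq, div_self hPQ.ne'],
      hX'.symm⟩

/-- A point of `T` outside the angle `POQ` lies on the side of `0` of the line `PQ`: otherwise
the point where `[0, X]` crosses that line would be interior, and then so would be `P` or `Q`. -/
theorem areaForm_le_of_not_mem_cone (hT : Convex ℝ T) (h0 : 0 ∈ interior T)
    (hP : P ∈ T \ interior T) (hQ : Q ∈ T \ interior T) (hPQ : 0 < ω P Q) (hX : X ∈ T)
    (hXout : ω P X ≤ 0 ∨ ω X Q ≤ 0) : ω (P - Q) X ≤ ω P Q := by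
  by_contra! hlt
  set s := ω P Q / ω (P - Q) X
  have hs0 : 0 < s := div_pos hPQ (hPQ.trans hlt)
  have hW : s • X ∈ interior T :=
    hT.smul_mem_interior_of_zero_mem_interior h0 hX hs0.le ((div_lt_one (hPQ.trans hlt)).2 hlt)
  have hsum : ω (s • X) Q + ω P (s • X) = ω P Q := by
    rw [← areaForm_sub_apply, map_smul, smul_eq_mul, div_mul_cancel₀ _ (hPQ.trans hlt).ne']
  have hcramer := areaForm_smul_eq P Q (s • X)
  rw [← hsum] at hcramer
  rcases hXout with hPX | hXQ
  · refine hP.2 (hT.mem_interior_of_smul_eq hW hQ.1 (hsum ▸ hPQ) ?_ hcramer)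
    rw [map_smul, smul_eq_mul]; exact mul_nonpos_of_nonneg_of_nonpos hs0.le hPX
  · rw [add_comm (ω (s • X) Q), add_comm (ω (s • X) Q • P)] at hcramer
    refine hQ.2 (hT.mem_interior_of_smul_eq hW hP.1 (by linarith) ?_ hcramer)
    rw [map_smul, LinearMap.smul_apply, smul_eq_mul]
    exact mul_nonpos_of_nonneg_of_nonpos hs0.le hXQ

end AreaForm

section Sectors

theorem Real.sin_nonpos_of_pi_le_of_le_two_pi {x : ℝ} (h1 : π ≤ x) (h2 : x ≤ 2 * π) :
    Real.sin x ≤ 0 := by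
  rw [← Real.sin_sub_two_pi]
  exact Real.sin_nonpos_of_nonpos_of_neg_pi_le (by linarith) (by linarith)

theorem Real.sin_sub_nonpos_or_sin_sub_nonpos {α β φ : ℝ} (hαβ : α ≤ β)
    (hφ : φ ∈ Icc β (α + 2 * π)) : Real.sin (φ - α) ≤ 0 ∨ Real.sin (β - φ) ≤ 0 := by
  by_cases h : π ≤ φ - α
  · exact Or.inl (Real.sin_nonpos_of_pi_le_of_le_two_pi h (by linarith [hφ.2]))
  · exact Or.inr (Real.sin_nonpos_of_nonpos_of_neg_pi_le (by linarith [hφ.1]) (by linarith))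

def sector (α β : ℝ) : Set ℂ := {z | ∃ x : ℝ, 0 < x ∧ ∃ φ ∈ Icc α β, z = x * cexp (φ * I)}

theorem Complex.exp_add_two_pi_mul_I (φ : ℝ) : cexp (↑(φ + 2 * π) * I) = cexp (φ * I) := by
  push_cast; exact Complex.exp_mul_I_periodic φ

theorem sector_subset_sector_add_two_pi (α β : ℝ) :
    sector α β ⊆ sector (α + 2 * π) (β + 2 * π) := by
  rintro _ ⟨x, hx, φ, hφ, rfl⟩
  exact ⟨x, hx, φ + 2 * π, ⟨by linarith [hφ.1], by linarith [hφ.2]⟩, by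
    rw [exp_add_two_pi_mul_I]⟩

variable {T A B : Set ℂ} {α β p q : ℝ}

theorem polar_mem_interior_of_lt (hT : Convex ℝ T) (h0 : 0 ∈ interior T) {x y φ : ℝ}
    (hy : ↑y * cexp (φ * I) ∈ T) (hx : 0 ≤ x) (hxy : x < y) :
    ↑x * cexp (φ * I) ∈ interior T := by
  have hy0 : 0 < y := hx.trans_lt hxy
  have := hT.smul_mem_interior_of_zero_mem_interior h0 hy (div_nonneg hx hy0.le)
    ((div_lt_one hy0).2 hxy)
  rwa [real_smul, ← mul_assoc, ← ofReal_mul, div_mul_cancel₀ _ hy0.ne'] at this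

theorem polar_eq_of_not_mem_interior (hT : Convex ℝ T) (h0 : 0 ∈ interior T) {x y φ : ℝ}
    (hx : 0 < x) (hy : 0 < y) (hX : ↑x * cexp (φ * I) ∈ T \ interior T)
    (hY : ↑y * cexp (φ * I) ∈ T \ interior T) : ↑x * cexp (φ * I) = ↑y * cexp (φ * I) := by
  rw [le_antisymm (not_lt.1 fun h => hX.2 (polar_mem_interior_of_lt hT h0 hY.1 hx.le h))
    (not_lt.1 fun h => hY.2 (polar_mem_interior_of_lt hT h0 hX.1 hy.le h))]

theorem subset_singleton_of_subset_sector_self (hT : Convex ℝ T) (h0 : 0 ∈ interior T)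
    (hA : A ⊆ sector α α ∩ (T \ interior T)) (hp : 0 < p)
    (hP : ↑p * cexp (α * I) ∈ T \ interior T) : A ⊆ {↑p * cexp (α * I)} := by
  intro z hz
  obtain ⟨⟨x, hx, φ, hφ, rfl⟩, hX⟩ := hA hz
  obtain rfl : φ = α := le_antisymm hφ.2 hφ.1
  exact polar_eq_of_not_mem_interior hT h0 hx hp hX hP

theorem convexHull_inter_subset_segment_of_lt_pi (hT : Convex ℝ T) (h0 : 0 ∈ interior T)
    (hαβ : α < β) (hβα : β < α + π) (hA : A ⊆ sector α β ∩ (T \ interior T))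
    (hB : B ⊆ sector β (α + 2 * π) ∩ T) (hp : 0 < p) (hq : 0 < q)
    (hP : ↑p * cexp (α * I) ∈ T \ interior T) (hQ : ↑q * cexp (β * I) ∈ T \ interior T) :
    convexHull ℝ A ∩ convexHull ℝ B ⊆ segment ℝ (↑p * cexp (α * I)) (↑q * cexp (β * I)) := by
  have hPQ : 0 < ω (↑p * cexp (α * I)) (↑q * cexp (β * I)) := by
    rw [areaForm_polar]
    exact mul_pos (mul_pos hp hq) (Real.sin_pos_of_pos_of_lt_pi (by linarith) (by linarith))
  refine convexHull_inter_subset_of_separates (convex_segment _ _)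
    (ω (↑p * cexp (α * I) - ↑q * cexp (β * I))) (ω (↑p * cexp (α * I)) (↑q * cexp (β * I))) ?_ ?_
  · intro z hz
    obtain ⟨⟨x, hx, φ, hφ, rfl⟩, hX⟩ := hA hz
    refine le_areaForm_of_mem_cone hT h0 hP.1 hQ.1 hPQ hX.2 ?_ ?_ <;> rw [areaForm_polar] <;>
      refine mul_nonneg (by positivity) (Real.sin_nonneg_of_nonneg_of_le_pi ?_ ?_) <;>
      linarith [hφ.1, hφ.2]
  · intro z hz
    obtain ⟨⟨x, hx, φ, hφ, rfl⟩, hX⟩ := hB hz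
    refine areaForm_le_of_not_mem_cone hT h0 hP hQ hPQ hX ?_
    rw [areaForm_polar, areaForm_polar]
    exact (Real.sin_sub_nonpos_or_sin_sub_nonpos hαβ.le hφ).imp
      (mul_nonpos_of_nonneg_of_nonpos (by positivity))
      (mul_nonpos_of_nonneg_of_nonpos (by positivity))

theorem convexHull_inter_subset_segment_of_eq_pi (hT : Convex ℝ T) (h0 : 0 ∈ interior T)
    (hA : A ⊆ sector α (α + π) ∩ (T \ interior T)) (hB : B ⊆ sector (α + π) (α + 2 * π))
    (hp : 0 < p) (hq : 0 < q) (hP : ↑p * cexp (α * I) ∈ T \ interior T)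
    (hQ : ↑q * cexp (↑(α + π) * I) ∈ T \ interior T) :
    convexHull ℝ A ∩ convexHull ℝ B ⊆
      segment ℝ (↑p * cexp (α * I)) (↑q * cexp (↑(α + π) * I)) := by
  refine convexHull_inter_subset_of_separates (convex_segment _ _) (ω (↑p * cexp (α * I))) 0
    ?_ ?_
  · intro z hz
    obtain ⟨⟨x, hx, φ, hφ, rfl⟩, hX⟩ := hA hz
    rw [areaForm_polar]
    refine ⟨mul_nonneg (by positivity) (Real.sin_nonneg_of_nonneg_of_le_pi (by linarith [hφ.1])
      (by linarith [hφ.2])), fun h => ?_⟩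
    have hsin := (mul_eq_zero.1 h).resolve_left (by positivity)
    rcases hφ.2.eq_or_lt with rfl | hlt
    · rw [polar_eq_of_not_mem_interior hT h0 hx hq hX hQ]
      exact right_mem_segment _ _ _
    · obtain rfl : φ = α := by
        linarith [(Real.sin_eq_zero_iff_of_lt_of_lt (by linarith [hφ.1]) (by linarith)).1 hsin]
      rw [polar_eq_of_not_mem_interior hT h0 hx hp hX hP]
      exact left_mem_segment _ _ _
  · intro z hz
    obtain ⟨x, hx, φ, hφ, rfl⟩ := hB hz
    rw [areaForm_polar]
    exact mul_nonpos_of_nonneg_of_nonpos (by positivity)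
      (Real.sin_nonpos_of_pi_le_of_le_two_pi (by linarith [hφ.1]) (by linarith [hφ.2]))

theorem convexHull_inter_subset_segment_of_sectors (hT : Convex ℝ T) (h0 : 0 ∈ interior T)
    (hαβ : α ≤ β) (hβα : β ≤ α + 2 * π) (hA : A ⊆ sector α β ∩ (T \ interior T))
    (hB : B ⊆ sector β (α + 2 * π) ∩ (T \ interior T)) (hp : 0 < p) (hq : 0 < q)
    (hP : ↑p * cexp (α * I) ∈ T \ interior T) (hQ : ↑q * cexp (β * I) ∈ T \ interior T) :
    convexHull ℝ A ∩ convexHull ℝ B ⊆ segment ℝ (↑p * cexp (α * I)) (↑q * cexp (β * I)) := by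
  rcases hαβ.eq_or_lt with rfl | hαβ
  · rintro z ⟨hz, -⟩
    rw [convexHull_min (subset_singleton_of_subset_sector_self hT h0 hA hp hP)
      (convex_singleton _) hz]
    exact left_mem_segment _ _ _
  rcases hβα.eq_or_lt with hβ | hβα
  · rw [← hβ] at hB
    rintro z ⟨-, hz⟩
    rw [convexHull_min (subset_singleton_of_subset_sector_self hT h0 hB hq hQ)
      (convex_singleton _) hz]
    exact right_mem_segment _ _ _
  rcases lt_trichotomy β (α + π) with hlt | rfl | hgt
  · exact convexHull_inter_subset_segment_of_lt_pi hT h0 hαβ hlt hA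
      (fun z hz => ⟨(hB hz).1, (hB hz).2.1⟩) hp hq hP hQ
  · exact convexHull_inter_subset_segment_of_eq_pi hT h0 hA (fun z hz => (hB hz).1) hp hq hP hQ
  · -- angles only matter modulo `2π`: this is the previous case with `A` and `B` exchanged
    rw [inter_comm, segment_symm, ← exp_add_two_pi_mul_I α]
    exact convexHull_inter_subset_segment_of_lt_pi hT h0 hβα (by linarith) hB
      (fun z hz => ⟨sector_subset_sector_add_two_pi α β (hA hz).1, (hA hz).2.1⟩) hq hp hQ
      (by rwa [exp_add_two_pi_mul_I])

end Sectors

section Arcs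

variable {T : Set ℂ} {Z : ℝ → ℂ} {r θ : ℝ → ℝ} {a b : ℝ}

theorem convexHull_arcs_inter_subset_segment_of_monotoneOn (hT : Convex ℝ T)
    (h0 : 0 ∈ interior T) (hZ : ∀ t ∈ Icc (0:ℝ) 1, Z t = r t * cexp (θ t * I))
    (hr : ∀ t ∈ Icc (0:ℝ) 1, 0 < r t) (hZT : ∀ t ∈ Icc (0:ℝ) 1, Z t ∈ T \ interior T)
    (hθ : MonotoneOn θ (Icc 0 1)) (hθ2π : θ 1 - θ 0 ≤ 2 * π) (ha : 0 ≤ a) (hab : a < b)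
    (hb : b ≤ 1) :
    convexHull ℝ (Z '' Icc a b) ∩ convexHull ℝ (Z '' (Icc b 1 ∪ Icc 0 a)) ⊆
      segment ℝ (Z a) (Z b) := by
  have hI : ∀ {s t : ℝ}, 0 ≤ s → t ≤ 1 → Icc s t ⊆ Icc 0 1 :=
    fun hs ht x hx => ⟨hs.trans hx.1, hx.2.trans ht⟩
  have h0I : (0:ℝ) ∈ Icc (0:ℝ) 1 := left_mem_Icc.2 zero_le_one
  have h1I : (1:ℝ) ∈ Icc (0:ℝ) 1 := right_mem_Icc.2 zero_le_one
  have haI : a ∈ Icc (0:ℝ) 1 := ⟨ha, by linarith⟩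
  have hbI : b ∈ Icc (0:ℝ) 1 := ⟨by linarith, hb⟩
  have hmem : ∀ t ∈ Icc (0:ℝ) 1, ∀ {α β : ℝ}, θ t ∈ Icc α β →
      Z t ∈ sector α β ∩ (T \ interior T) :=
    fun t ht _ _ hθt => ⟨⟨r t, hr t ht, θ t, hθt, hZ t ht⟩, hZT t ht⟩
  rw [hZ a haI, hZ b hbI]
  refine convexHull_inter_subset_segment_of_sectors hT h0 (hθ haI hbI hab.le)
    (by linarith [hθ hbI h1I hb, hθ h0I haI ha]) ?_ ?_ (hr a haI) (hr b hbI)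
    (hZ a haI ▸ hZT a haI) (hZ b hbI ▸ hZT b hbI)
  · rintro _ ⟨t, ht, rfl⟩
    exact hmem t (hI ha hb ht) ⟨hθ haI (hI ha hb ht) ht.1, hθ (hI ha hb ht) hbI ht.2⟩
  · rintro _ ⟨t, ht | ht, rfl⟩
    · have htI := hI (by linarith) le_rfl ht
      exact hmem t htI ⟨hθ hbI htI ht.1, by linarith [hθ htI h1I ht.2, hθ h0I haI ha]⟩
    · have htI := hI le_rfl (by linarith) ht
      have hZt := hmem t htI (α := θ b - 2 * π) (β := θ a)
        ⟨by linarith [hθ h0I htI ht.1, hθ hbI h1I hb], hθ htI haI ht.2⟩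
      exact ⟨by simpa using sector_subset_sector_add_two_pi _ _ hZt.1, hZt.2⟩

theorem convexHull_arcs_inter_subset_segment (hT : Convex ℝ T) (h0 : 0 ∈ interior T)
    (hZ : ∀ t ∈ Icc (0:ℝ) 1, Z t = r t * cexp (θ t * I)) (hr : ∀ t ∈ Icc (0:ℝ) 1, 0 < r t)
    (hZT : ∀ t ∈ Icc (0:ℝ) 1, Z t ∈ T \ interior T)
    (hθ : MonotoneOn θ (Icc 0 1) ∨ AntitoneOn θ (Icc 0 1)) (hθ2π : |θ 1 - θ 0| ≤ 2 * π)
    (ha : 0 ≤ a) (hab : a < b) (hb : b ≤ 1) :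
    convexHull ℝ (Z '' Icc a b) ∩ convexHull ℝ (Z '' (Icc b 1 ∪ Icc 0 a)) ⊆
      segment ℝ (Z a) (Z b) := by
  rcases hθ with hθ | hθ
  · exact convexHull_arcs_inter_subset_segment_of_monotoneOn hT h0 hZ hr hZT hθ
      ((le_abs_self _).trans hθ2π) ha hab hb
  -- reversing the parameter, `t ↦ 1 - t`, makes the angle monotone and exchanges `a` and `b`
  have hrev : ∀ t ∈ Icc (0:ℝ) 1, 1 - t ∈ Icc (0:ℝ) 1 :=
    fun t ht => ⟨by linarith [ht.2], by linarith [ht.1]⟩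
  have himage : ∀ s t : ℝ, (fun x => Z (1 - x)) '' Icc s t = Z '' Icc (1 - t) (1 - s) := by
    intro s t
    rw [← image_image Z (fun x => 1 - x), image_const_sub_Icc]
  have := convexHull_arcs_inter_subset_segment_of_monotoneOn (Z := fun t => Z (1 - t))
    (r := fun t => r (1 - t)) (θ := fun t => θ (1 - t)) hT h0 (fun t ht => hZ _ (hrev t ht))
    (fun t ht => hr _ (hrev t ht)) (fun t ht => hZT _ (hrev t ht))
    (fun s hs t ht hst => hθ (hrev t ht) (hrev s hs) (by linarith))
    (by simp only [sub_self, sub_zero]; linarith [neg_le_abs (θ 1 - θ 0)])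
    (a := 1 - b) (b := 1 - a) (by linarith) (by linarith) (by linarith)
  simpa [himage, image_union, union_comm, segment_symm] using this

end Arcs

section PlaneChart

variable {E : Type*} [NormedAddCommGroup E] [InnerProductSpace ℝ E] {c u v : E}

def planeChart (c u v : E) : ℂ →ᵃ[ℝ] E where
  toFun z := c + z.re • u + z.im • v
  linear := Complex.reLm.smulRight u + Complex.imLm.smulRight v
  map_vadd' z w := by
    simp only [vadd_eq_add, add_re, add_im, add_smul, LinearMap.add_apply,
      LinearMap.coe_smulRight, reLm_coe, imLm_coe]
    abel

theorem planeChart_apply (z : ℂ) : planeChart c u v z = c + z.re • u + z.im • v := rfl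

theorem planeChart_polar (x φ : ℝ) :
    planeChart c u v (x * cexp (φ * I)) = c + x • (Real.cos φ • u + Real.sin φ • v) := by
  simp [planeChart_apply, exp_ofReal_mul_I_re, exp_ofReal_mul_I_im, smul_add, smul_smul,
    add_assoc]

def planeCoord (c u v : E) (x : E) : ℂ := inner ℝ u (x - c) + inner ℝ v (x - c) * I

theorem continuous_planeCoord : Continuous (planeCoord c u v) := by
  unfold planeCoord
  fun_prop

theorem planeCoord_planeChart (hu : ‖u‖ = 1) (hv : ‖v‖ = 1) (huv : inner ℝ u v = (0:ℝ))
    (z : ℂ) : planeCoord c u v (planeChart c u v z) = z := by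
  apply Complex.ext <;>
    simp [planeCoord, planeChart_apply, add_assoc, inner_add_right, inner_smul_right, huv,
      real_inner_comm u v, hu, hv]

end PlaneChart

theorem eq_inner_smul_add_inner_smul {u v w : E3} (hu : ‖u‖ = 1) (hv : ‖v‖ = 1)
    (huv : inner ℝ u v = (0:ℝ)) (hu0 : u 0 + u 1 + u 2 = 0) (hv0 : v 0 + v 1 + v 2 = 0)
    (hw : w 0 + w 1 + w 2 = 0) : w = inner ℝ u w • u + inner ℝ v w • v := by
  set n : E3 := WithLp.toLp 2 fun _ => 1
  have hn : ∀ x : E3, inner ℝ n x = x 0 + x 1 + x 2 := fun x => by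
    simp [n, PiLp.inner_apply, Fin.sum_univ_three]
  have hli : LinearIndependent ℝ ![u, v, n] := by
    refine linearIndependent_of_ne_zero_of_inner_eq_zero (fun i => ?_) fun i j hij => ?_
    · fin_cases i <;> simp [← norm_ne_zero_iff, hu, hv, n]
    · fin_cases i <;> fin_cases j <;> simp_all [real_inner_comm]
  refine InnerProductSpace.ext_inner_left_basis
    (basisOfLinearIndependentOfCardEqFinrank hli (by simp)) fun i => ?_
  fin_cases i
  · simp [inner_add_right, inner_smul_right, huv, hu]
  · simp [inner_add_right, inner_smul_right, real_inner_comm u v, huv, hv]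
  · simp only [coe_basisOfLinearIndependentOfCardEqFinrank, Fin.reduceFinMk, Matrix.cons_val,
      hn, hw, PiLp.add_apply, PiLp.smul_apply, smul_eq_mul]
    linear_combination (-inner ℝ u w) * hu0 - inner ℝ v w * hv0

theorem planeChart_mem_planeA {c u v : E3} (hc : c ∈ planeA) (hu0 : u 0 + u 1 + u 2 = 0)
    (hv0 : v 0 + v 1 + v 2 = 0) (z : ℂ) : planeChart c u v z ∈ planeA := by
  simp only [planeA, mem_ofPred_eq, planeChart_apply, PiLp.add_apply, PiLp.smul_apply,
    smul_eq_mul] at hc ⊢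
  linear_combination hc + z.re * hu0 + z.im * hv0

theorem planeChart_planeCoord {c u v x : E3} (hu : ‖u‖ = 1) (hv : ‖v‖ = 1)
    (huv : inner ℝ u v = (0:ℝ)) (hu0 : u 0 + u 1 + u 2 = 0) (hv0 : v 0 + v 1 + v 2 = 0)
    (hc : c ∈ planeA) (hx : x ∈ planeA) : planeChart c u v (planeCoord c u v x) = x := by
  have hxc : (x - c) 0 + (x - c) 1 + (x - c) 2 = 0 := by
    simp only [planeA, mem_ofPred_eq, PiLp.sub_apply] at hc hx ⊢
    linarith
  rw [planeChart_apply, add_assoc]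
  simp [planeCoord, ← eq_inner_smul_add_inner_smul hu hv huv hu0 hv0 hxc]

theorem preimage_planeChart_intA {c u v : E3} (hu : ‖u‖ = 1) (hv : ‖v‖ = 1)
    (huv : inner ℝ u v = (0:ℝ)) (hu0 : u 0 + u 1 + u 2 = 0) (hv0 : v 0 + v 1 + v 2 = 0)
    (hc : c ∈ planeA) (S : Set E3) :
    planeChart c u v ⁻¹' intA S = interior (planeChart c u v ⁻¹' S) := by
  set G := planeChart c u v
  ext z
  constructor
  · rintro ⟨-, U, hU, hzU, hUS⟩
    exact mem_interior.2 ⟨G ⁻¹' U, fun y hy => hUS ⟨hy, planeChart_mem_planeA hc hu0 hv0 y⟩,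
      hU.preimage G.continuous_of_finiteDimensional, hzU⟩
  · intro hz
    refine ⟨planeChart_mem_planeA hc hu0 hv0 z, planeCoord c u v ⁻¹' interior (G ⁻¹' S),
      isOpen_interior.preimage continuous_planeCoord,
      by rwa [mem_preimage, planeCoord_planeChart hu hv huv], ?_⟩
    rintro x ⟨hx, hxA⟩
    rw [← planeChart_planeCoord hu hv huv hu0 hv0 hc hxA]
    exact (interior_subset hx : planeCoord c u v x ∈ G ⁻¹' S)

theorem convexHull_arcs_inter_subset_segment_of_eqOn_comp {E F : Type*} [AddCommGroup E]
    [Module ℝ E] [AddCommGroup F] [Module ℝ F] {G : E →ᵃ[ℝ] F} (hG : Function.Injective G)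
    {η : ℝ → F} {Z : ℝ → E} (hηZ : EqOn η (G ∘ Z) (Icc 0 1)) {a b : ℝ} (ha : 0 ≤ a) (hab : a < b)
    (hb : b ≤ 1)
    (hZ : convexHull ℝ (Z '' Icc a b) ∩ convexHull ℝ (Z '' (Icc b 1 ∪ Icc 0 a)) ⊆
      segment ℝ (Z a) (Z b)) :
    convexHull ℝ (η '' Icc a b) ∩ convexHull ℝ (η '' (Icc b 1 ∪ Icc 0 a)) ⊆
      segment ℝ (η a) (η b) := by
  have hhull : ∀ s ⊆ Icc (0:ℝ) 1, convexHull ℝ (η '' s) = G '' convexHull ℝ (Z '' s) :=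
    fun s hs => by rw [(hηZ.mono hs).image_eq, image_comp, G.image_convexHull]
  have haI : a ∈ Icc (0:ℝ) 1 := ⟨ha, by linarith⟩
  have hbI : b ∈ Icc (0:ℝ) 1 := ⟨by linarith, hb⟩
  rw [hhull _ (Icc_subset_Icc ha hb), hhull _ (union_subset (Icc_subset_Icc hbI.1 le_rfl)
    (Icc_subset_Icc le_rfl haI.2)), ← image_inter hG, hηZ haI, hηZ hbI, Function.comp_apply,
    Function.comp_apply, ← image_segment]
  exact image_mono hZ

theorem hulls_of_complementary_arcs_meet_in_chord_general
    (η : ℝ → E3)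
    (u v : E3) (hu : ‖u‖ = 1) (hv : ‖v‖ = 1) (huv : (inner ℝ u v : ℝ) = 0)
    (hu0 : u 0 + u 1 + u 2 = 0) (hv0 : v 0 + v 1 + v 2 = 0)
    (hTint : (intA (colorTri η)).Nonempty)
    (hconv : IsConvexLocus η u v)
    (a b : ℝ) (ha : 0 ≤ a) (hab : a < b) (hb : b ≤ 1) :
    convexHull ℝ (η '' Icc a b) ∩ convexHull ℝ (η '' (Icc b 1 ∪ Icc 0 a)) =
      segment ℝ (η a) (η b) := by
  obtain ⟨c, hc⟩ := hTint
  obtain ⟨hfront, hangle⟩ := hconv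
  obtain ⟨θ, -, hθ, hθ2π, hpolar⟩ := hangle c hc
  set G := planeChart c u v
  set Z : ℝ → ℂ := fun t => ‖η t - c‖ * cexp (θ t * I)
  have hηZ : EqOn η (G ∘ Z) (Icc 0 1) := fun t ht => by
    rw [Function.comp_apply, planeChart_polar, ← hpolar t ht, add_sub_cancel]
  have hG := preimage_planeChart_intA hu hv huv hu0 hv0 hc.1 (colorTri η)
  refine Subset.antisymm (convexHull_arcs_inter_subset_segment_of_eqOn_comp
    (Function.LeftInverse.injective (planeCoord_planeChart hu hv huv)) hηZ ha hab hb
    (convexHull_arcs_inter_subset_segment (T := G ⁻¹' colorTri η)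
      ((convex_convexHull ℝ _).affine_preimage G) ?_ (fun _ _ => rfl) ?_ ?_ hθ hθ2π ha hab hb))
    (subset_inter
      (segment_subset_convexHull ⟨a, left_mem_Icc.2 hab.le, rfl⟩ ⟨b, right_mem_Icc.2 hab.le, rfl⟩)
      (segment_subset_convexHull ⟨a, Or.inr (right_mem_Icc.2 ha), rfl⟩
        ⟨b, Or.inl (left_mem_Icc.2 hb), rfl⟩))
  · rw [← hG]
    simpa [G, planeChart_apply] using hc
  · exact fun t ht => norm_pos_iff.2 (sub_ne_zero.2 fun h => (hfront ⟨t, ht, rfl⟩).2 (h ▸ hc))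
  · intro t ht
    rw [← hG, mem_sdiff, mem_preimage, mem_preimage, ← Function.comp_apply (f := G), ← hηZ ht]
    exact ⟨subset_convexHull ℝ _ ⟨t, ht, rfl⟩, (hfront ⟨t, ht, rfl⟩).2⟩

/-- if the spectral locus is convex, then for `0 ≤ a < b ≤ 1` the convex hulls of
the two complementary arcs of the locus meet exactly in the chord `[η(a), η(b)]`. -/
theorem hulls_of_complementary_arcs_meet_in_chord
    (η : ℝ → E3) (hηcont : ContinuousOn η (Icc 0 1))
    (hηΔ : ∀ lam ∈ Icc (0:ℝ) 1, η lam ∈ simplex2)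
    (u v : E3) (hu : ‖u‖ = 1) (hv : ‖v‖ = 1) (huv : (inner ℝ u v : ℝ) = 0)
    (hu0 : u 0 + u 1 + u 2 = 0) (hv0 : v 0 + v 1 + v 2 = 0)
    (hTint : (intA (colorTri η)).Nonempty)
    (hconv : IsConvexLocus η u v)
    (a b : ℝ) (ha : 0 ≤ a) (hab : a < b) (hb : b ≤ 1) :
    convexHull ℝ (η '' Icc a b) ∩ convexHull ℝ (η '' (Icc b 1 ∪ Icc 0 a)) =
      segment ℝ (η a) (η b) :=
  hulls_of_complementary_arcs_meet_in_chord_general η u v hu hv huv hu0 hv0 hTint hconv a b ha hab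
    hb
end
end

section
/- Assume the spectral locus is strictly convex. Let f, g : [0,1] → ℝ be μ̃-integrable functions with ∫_{[0,1]} f dμ̃ = ∫_{[0,1]} g dμ̃ = 1 such that f − g changes sign twice on [0,1]. Then c(f) ≠ c(g), i.e. ∫_{[0,1]} f·η dμ̃ ≠ ∫_{[0,1]} g·η dμ̃. -/
open MeasureTheory Set Real

noncomputable section

/-- `w` changes sign twice on `[0,1]` (w.r.t. the measure `mu`). -/
def changesSignTwice (mu : Measure ℝ) (w : ℝ → ℝ) : Prop :=
  0 < mu {lam | lam ∈ Icc (0:ℝ) 1 ∧ 0 < w lam} ∧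
  0 < mu {lam | lam ∈ Icc (0:ℝ) 1 ∧ w lam < 0} ∧
  ∃ a ∈ Icc (0:ℝ) 1, ∃ b ∈ Icc (0:ℝ) 1,
    (interior (cycIcc a b)).Nonempty ∧
    (interior (Icc (0:ℝ) 1 \ cycIcc a b)).Nonempty ∧
    (∀ lam ∈ cycIcc a b, 0 ≤ w lam) ∧
    (∀ lam ∈ Icc (0:ℝ) 1 \ cycIcc a b, w lam ≤ 0)

/-
Put `w = f - g`. Equal colors mean `∫ w = 0` and `∫ w • η = 0`, so `∫ w · ψ(η) = 0` for every affine
functional `ψ`. In coordinates of the plane of `T`, strict convexity says that no three points of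
the locus are collinear, so the signed area of `η r, η s, η t` never vanishes for `r < s < t`; the
set of such triples being connected, it has constant sign. Hence the line through `η a` and `η b`,
where `[a, b]_𝕋` is the arc on which `w ≥ 0`, separates `η` of that arc from `η` of its complement:
an affine `ψ` vanishing on the line has `ψ(η) ≥ 0` on the arc and `ψ(η) < 0` off it. Then
`w · ψ(η) ≥ 0` has integral zero, so `w < 0` only on a null set.
-/

def signedArea (p q r : ℝ × ℝ) : ℝ :=
  (q.1 - p.1) * (r.2 - p.2) - (q.2 - p.2) * (r.1 - p.1)

theorem collinear_of_signedArea_eq_zero {p q r : ℝ × ℝ} (h : signedArea p q r = 0) :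
    Collinear ℝ ({p, q, r} : Set (ℝ × ℝ)) := by
  by_cases hpq : p = q
  · simp [hpq, collinear_pair]
  rw [show ({p, q, r} : Set (ℝ × ℝ)) = {r, p, q} by ext; simp; tauto]
  refine collinear_insert_of_mem_affineSpan_pair (mem_affineSpan_pair_iff_exists_lineMap_eq.2 ?_)
  unfold signedArea at h
  have hline : ∀ k : ℝ, AffineMap.lineMap p q k = (p.1 + k * (q.1 - p.1), p.2 + k * (q.2 - p.2)) :=
    fun k => by ext <;> simp [AffineMap.lineMap_apply] <;> ring
  simp only [hline]
  by_cases h1 : q.1 = p.1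
  · have h2 : q.2 - p.2 ≠ 0 := fun h2 => hpq (Prod.ext h1.symm (by linarith))
    refine ⟨(r.2 - p.2) / (q.2 - p.2), Prod.ext ?_ ?_⟩
    · rw [h1] at h ⊢
      have hr1 : r.1 - p.1 = 0 := by simpa [h2] using h
      simp only [sub_self, mul_zero, add_zero]
      linarith
    · field_simp; ring
  · have h1' : q.1 - p.1 ≠ 0 := sub_ne_zero.2 h1
    refine ⟨(r.1 - p.1) / (q.1 - p.1), Prod.ext ?_ ?_⟩
    · field_simp; ring
    · field_simp; linarith

theorem IsPreconnected.exists_forall_pos_mul {α : Type*} [TopologicalSpace α] {S : Set α}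
    (hS : IsPreconnected S) {F : α → ℝ} (hF : ContinuousOn F S) (h0 : ∀ x ∈ S, F x ≠ 0) :
    ∃ σ : ℝ, ∀ x ∈ S, 0 < σ * F x := by
  rcases S.eq_empty_or_nonempty with rfl | ⟨x₀, hx₀⟩
  · exact ⟨0, by simp⟩
  refine ⟨F x₀, fun x hx => ?_⟩
  have hI := (hS.image F hF).Icc_subset (mem_image_of_mem F hx₀) (mem_image_of_mem F hx)
  have hI' := (hS.image F hF).Icc_subset (mem_image_of_mem F hx) (mem_image_of_mem F hx₀)
  by_contra! hle
  have hzero : (0 : ℝ) ∈ F '' S := by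
    rcases (h0 x₀ hx₀).lt_or_gt with h | h
    · exact hI ⟨h.le, by nlinarith⟩
    · exact hI' ⟨by nlinarith, h.le⟩
  obtain ⟨y, hy, hy0⟩ := hzero
  exact h0 y hy hy0

theorem convex_increasingTriples :
    Convex ℝ {q : ℝ × ℝ × ℝ | 0 ≤ q.1 ∧ q.1 < q.2.1 ∧ q.2.1 < q.2.2 ∧ q.2.2 ≤ 1} := by
  rintro q ⟨h₁, h₂, h₃, h₄⟩ q' ⟨h₁', h₂', h₃', h₄'⟩ α β hα hβ hαβ
  have key : ∀ x y x' y' : ℝ, x < y → x' < y' → α * x + β * x' < α * y + β * y' := by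
    intro x y x' y' h h'
    rcases hα.eq_or_lt with rfl | hα'
    · simp only [zero_add, zero_mul] at hαβ ⊢; simp [hαβ, h']
    · nlinarith [mul_pos hα' (sub_pos.2 h), mul_nonneg hβ (sub_pos.2 h').le]
  simp only [mem_ofPred_eq, Prod.fst_add, Prod.snd_add, Prod.smul_fst, Prod.smul_snd, smul_eq_mul]
  exact ⟨by positivity, key _ _ _ _ h₂ h₂', key _ _ _ _ h₃ h₃', by nlinarith⟩

theorem exists_forall_pos_mul_signedArea {γ : ℝ → ℝ × ℝ} (hγ : ContinuousOn γ (Icc 0 1))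
    (hne : ∀ r s t, 0 ≤ r → r < s → s < t → t ≤ 1 → signedArea (γ r) (γ s) (γ t) ≠ 0) :
    ∃ σ : ℝ, ∀ r s t, 0 ≤ r → r < s → s < t → t ≤ 1 →
      0 < σ * signedArea (γ r) (γ s) (γ t) := by
  set O := {q : ℝ × ℝ × ℝ | 0 ≤ q.1 ∧ q.1 < q.2.1 ∧ q.2.1 < q.2.2 ∧ q.2.2 ≤ 1}
  have hO : ∀ q ∈ O, q.1 ∈ Icc (0:ℝ) 1 ∧ q.2.1 ∈ Icc (0:ℝ) 1 ∧ q.2.2 ∈ Icc (0:ℝ) 1 :=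
    fun q ⟨h₁, h₂, h₃, h₄⟩ =>
      ⟨⟨h₁, by linarith⟩, ⟨by linarith, by linarith⟩, ⟨by linarith, h₄⟩⟩
  have hArea : Continuous fun x : (ℝ × ℝ) × (ℝ × ℝ) × (ℝ × ℝ) => signedArea x.1 x.2.1 x.2.2 := by
    unfold signedArea; fun_prop
  have hF : ContinuousOn (fun q : ℝ × ℝ × ℝ => signedArea (γ q.1) (γ q.2.1) (γ q.2.2)) O :=
    hArea.comp_continuousOn <|
      (hγ.comp continuous_fst.continuousOn fun q hq => (hO q hq).1).prodMk <|
      (hγ.comp continuous_snd.fst.continuousOn fun q hq => (hO q hq).2.1).prodMk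
      (hγ.comp continuous_snd.snd.continuousOn fun q hq => (hO q hq).2.2)
  obtain ⟨σ, hσ⟩ := convex_increasingTriples.isPreconnected.exists_forall_pos_mul hF
    fun q hq => hne _ _ _ hq.1 hq.2.1 hq.2.2.1 hq.2.2.2
  exact ⟨σ, fun r s t h₁ h₂ h₃ h₄ => hσ (r, s, t) ⟨h₁, h₂, h₃, h₄⟩⟩

theorem signedArea_rotate (p q r : ℝ × ℝ) : signedArea q r p = signedArea p q r := by
  unfold signedArea; ring

theorem signedArea_swap (p q r : ℝ × ℝ) : signedArea p r q = -signedArea p q r := by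
  unfold signedArea; ring

@[simp] theorem signedArea_self_left (p q : ℝ × ℝ) : signedArea p p q = 0 := by
  unfold signedArea; ring

@[simp] theorem signedArea_self_right (p q : ℝ × ℝ) : signedArea p q q = 0 := by
  unfold signedArea; ring

theorem cycIcc_subset_Icc {a b : ℝ} (ha : a ∈ Icc (0 : ℝ) 1) (hb : b ∈ Icc (0 : ℝ) 1) :
    cycIcc a b ⊆ Icc 0 1 := by
  unfold cycIcc
  split_ifs
  · exact Icc_subset_Icc ha.1 hb.2
  · exact union_subset (Icc_subset_Icc ha.1 le_rfl) (Icc_subset_Icc le_rfl hb.2)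

theorem signedArea_sign_cycIcc {γ : ℝ → ℝ × ℝ} {σ : ℝ}
    (hσ : ∀ r s t, 0 ≤ r → r < s → s < t → t ≤ 1 → 0 < σ * signedArea (γ r) (γ s) (γ t))
    {a b : ℝ} (ha : a ∈ Icc (0 : ℝ) 1) (hb : b ∈ Icc (0 : ℝ) 1) (hab : a ≠ b) :
    (∀ l ∈ cycIcc a b, 0 ≤ σ * signedArea (γ a) (γ l) (γ b)) ∧
      ∀ l ∈ Icc 0 1 \ cycIcc a b, σ * signedArea (γ a) (γ l) (γ b) < 0 := by
  have hcyc : ∀ r s t, r ∈ Icc (0 : ℝ) 1 → s ∈ Icc (0 : ℝ) 1 → t ∈ Icc (0 : ℝ) 1 →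
      (r < s ∧ s < t ∨ s < t ∧ t < r ∨ t < r ∧ r < s) →
      0 < σ * signedArea (γ r) (γ s) (γ t) := by
    rintro r s t hr hs ht (⟨h₁, h₂⟩ | ⟨h₁, h₂⟩ | ⟨h₁, h₂⟩)
    · exact hσ r s t hr.1 h₁ h₂ ht.2
    · rw [← signedArea_rotate]; exact hσ s t r hs.1 h₁ h₂ hr.2
    · rw [signedArea_rotate (γ t)]; exact hσ t r s ht.1 h₁ h₂ hs.2
  refine ⟨fun l hl => ?_, fun l ⟨hl, hlab⟩ => ?_⟩
  · rcases eq_or_ne l a with rfl | hla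
    · simp
    rcases eq_or_ne l b with rfl | hlb
    · simp
    refine (hcyc a l b ha (cycIcc_subset_Icc ha hb hl) hb ?_).le
    unfold cycIcc at hl
    split_ifs at hl <;> grind
  · rw [signedArea_swap, mul_neg, neg_lt_zero]
    refine hcyc a b l ha hb hl ?_
    unfold cycIcc at hlab
    split_ifs at hlab <;> grind

theorem signedArea_ne_zero_of_notMem_segment {W : Type*} [AddCommGroup W] [Module ℝ W]
    {η : ℝ → W} {γ : ℝ → ℝ × ℝ} (A : ℝ × ℝ →ᵃ[ℝ] W) (hηγ : EqOn η (A ∘ γ) (Icc 0 1))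
    (hchord : ∀ a ∈ Icc (0:ℝ) 1, ∀ b ∈ Icc (0:ℝ) 1, ∀ l ∈ Icc (0:ℝ) 1,
      a ≠ b → b ≠ l → a ≠ l → η l ∉ segment ℝ (η a) (η b))
    {r s t : ℝ} (hr : 0 ≤ r) (hrs : r < s) (hst : s < t) (ht : t ≤ 1) :
    signedArea (γ r) (γ s) (γ t) ≠ 0 := by
  have hrI : r ∈ Icc (0:ℝ) 1 := ⟨hr, by linarith⟩
  have hsI : s ∈ Icc (0:ℝ) 1 := ⟨by linarith, by linarith⟩
  have htI : t ∈ Icc (0:ℝ) 1 := ⟨by linarith, ht⟩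
  have hnot : ∀ x ∈ Icc (0:ℝ) 1, ∀ y ∈ Icc (0:ℝ) 1, ∀ z ∈ Icc (0:ℝ) 1,
      x ≠ z → z ≠ y → x ≠ y → ¬Wbtw ℝ (γ x) (γ y) (γ z) := by
    intro x hx y hy z hz hxz hzy hxy h
    refine hchord x hx z hz y hy hxz hzy hxy ?_
    rw [hηγ hx, hηγ hy, hηγ hz, mem_segment_iff_wbtw]
    exact h.map A
  have hrt : r < t := hrs.trans hst
  intro h0
  rcases (collinear_of_signedArea_eq_zero h0).wbtw_or_wbtw_or_wbtw with h | h | h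
  · exact hnot r hrI s hsI t htI hrt.ne hst.ne' hrs.ne h
  · exact hnot s hsI t htI r hrI hrs.ne' hrt.ne hst.ne h
  · exact hnot t htI r hrI s hsI hst.ne' hrs.ne' hrt.ne' h

section InnerProductSpace

variable {W : Type*} [NormedAddCommGroup W] [InnerProductSpace ℝ W]

theorem inner_smul_add_inner_smul_of_mem_span_pair {u v x : W} (hu : ‖u‖ = 1) (hv : ‖v‖ = 1)
    (huv : inner ℝ u v = 0) (hx : x ∈ Submodule.span ℝ {u, v}) :
    inner ℝ u x • u + inner ℝ v x • v = x := by
  obtain ⟨α, β, rfl⟩ := Submodule.mem_span_pair.1 hx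
  simp [inner_add_right, inner_smul_right, hu, hv, huv, real_inner_comm u v]

theorem exists_inner_sign_cycIcc {η : ℝ → W} (hη : ContinuousOn η (Icc 0 1)) {c u v : W}
    (hu : ‖u‖ = 1) (hv : ‖v‖ = 1) (huv : inner ℝ u v = 0)
    (hplanar : ∀ l ∈ Icc (0:ℝ) 1, η l - c ∈ Submodule.span ℝ {u, v})
    (hchord : ∀ a ∈ Icc (0:ℝ) 1, ∀ b ∈ Icc (0:ℝ) 1, ∀ l ∈ Icc (0:ℝ) 1,
      a ≠ b → b ≠ l → a ≠ l → η l ∉ segment ℝ (η a) (η b))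
    {a b : ℝ} (ha : a ∈ Icc (0:ℝ) 1) (hb : b ∈ Icc (0:ℝ) 1) (hab : a ≠ b) :
    ∃ U : W, (∀ l ∈ cycIcc a b, 0 ≤ inner ℝ U (η l - η a)) ∧
      ∀ l ∈ Icc 0 1 \ cycIcc a b, inner ℝ U (η l - η a) < 0 := by
  set γ : ℝ → ℝ × ℝ := fun l => (inner ℝ u (η l - c), inner ℝ v (η l - c))
  let A : ℝ × ℝ →ᵃ[ℝ] W := ((LinearMap.fst ℝ ℝ ℝ).smulRight u +
    (LinearMap.snd ℝ ℝ ℝ).smulRight v).toAffineMap + AffineMap.const ℝ _ c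
  have hηγ : EqOn η (A ∘ γ) (Icc 0 1) := fun l hl => by
    simp [A, γ, inner_smul_add_inner_smul_of_mem_span_pair hu hv huv (hplanar l hl)]
  have hγ : ContinuousOn γ (Icc 0 1) := by fun_prop
  obtain ⟨σ, hσ⟩ := exists_forall_pos_mul_signedArea hγ
    fun r s t => signedArea_ne_zero_of_notMem_segment A hηγ hchord
  obtain ⟨hI, hC⟩ := signedArea_sign_cycIcc hσ ha hb hab
  -- a normal to the chord from `η a` to `η b` inside the plane of the locus
  set U : W := σ • (((γ b).2 - (γ a).2) • u - ((γ b).1 - (γ a).1) • v)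
  have hU : ∀ l, inner ℝ U (η l - η a) = σ * signedArea (γ a) (γ l) (γ b) := fun l => by
    simp only [U, γ, signedArea, real_inner_smul_left, inner_sub_left, inner_sub_right,
      sub_sub_sub_cancel_right]
    ring
  exact ⟨U, fun l hl => hU l ▸ hI l hl, fun l hl => hU l ▸ hC l hl⟩

end InnerProductSpace

section Integral

variable {α : Type*} [MeasurableSpace α] {μ : Measure α}

theorem measure_setOf_neg_eq_zero_of_integral_mul_eq_zero {w h : α → ℝ}
    (hint : Integrable (fun x => w x * h x) μ) (hzero : ∫ x, w x * h x ∂μ = 0)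
    (hsign : ∀ᵐ x ∂μ, 0 ≤ w x ∧ 0 ≤ h x ∨ w x ≤ 0 ∧ h x < 0) :
    μ {x | w x < 0} = 0 := by
  have hnonneg : 0 ≤ᵐ[μ] fun x => w x * h x := by
    filter_upwards [hsign] with x hx
    rcases hx with ⟨hw, hh⟩ | ⟨hw, hh⟩
    · exact mul_nonneg hw hh
    · exact mul_nonneg_of_nonpos_of_nonpos hw hh.le
  have hae := (integral_eq_zero_iff_of_nonneg_ae hnonneg hint).1 hzero
  refine measure_eq_zero_iff_ae_notMem.2 ?_
  filter_upwards [hsign, hae] with x hx hx0 hneg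
  rcases hx with ⟨hw, -⟩ | ⟨-, hh⟩
  · exact (not_lt.2 hw) hneg
  · exact (mul_pos_of_neg_of_neg hneg hh).ne' hx0

variable {W : Type*} [NormedAddCommGroup W] [InnerProductSpace ℝ W] [CompleteSpace W]

theorem integral_mul_inner_sub_eq_zero {w : α → ℝ} {η : α → W} (hw : Integrable w μ)
    (hwη : Integrable (fun x => w x • η x) μ) (hw0 : ∫ x, w x ∂μ = 0)
    (hwη0 : ∫ x, w x • η x ∂μ = 0) (U p : W) :
    ∫ x, w x * inner ℝ U (η x - p) ∂μ = 0 := by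
  have hexpand : ∀ x, w x * inner ℝ U (η x - p) = inner ℝ U (w x • η x) - inner ℝ U p * w x :=
    fun x => by rw [inner_sub_right, real_inner_smul_right]; ring
  simp_rw [hexpand]
  rw [integral_sub (hwη.const_inner U) (hw.const_mul _), integral_inner hwη, hwη0,
    integral_const_mul, hw0, inner_zero_right, mul_zero, sub_zero]

end Integral

theorem IsConvexLocus.sub_mem_span {η : ℝ → E3} {u v : E3} (h : IsConvexLocus η u v) {c : E3}
    (hc : c ∈ intA (colorTri η)) : ∀ l ∈ Icc (0:ℝ) 1, η l - c ∈ Submodule.span ℝ {u, v} := by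
  obtain ⟨θ, -, -, -, hθ⟩ := h.2 c hc
  intro l hl
  rw [hθ l hl]
  exact Submodule.smul_mem _ _ (Submodule.mem_span_pair.2 ⟨_, _, rfl⟩)

theorem colors_differ_of_changes_sign_twice_general
    (η : ℝ → E3) (hηcont : ContinuousOn η (Icc 0 1))
    (u v : E3) (hu : ‖u‖ = 1) (hv : ‖v‖ = 1) (huv : (inner ℝ u v : ℝ) = 0)
    (mu : Measure ℝ)
    (hTint : (intA (colorTri η)).Nonempty)
    (hconv : IsStrictConvexLocus η u v)
    (f g : ℝ → ℝ)
    (hf : IntegrableOn f (Icc 0 1) mu) (hg : IntegrableOn g (Icc 0 1) mu)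
    (hf1 : (∫ lam in Icc (0:ℝ) 1, f lam ∂mu) = 1)
    (hg1 : (∫ lam in Icc (0:ℝ) 1, g lam ∂mu) = 1)
    (hsign : changesSignTwice mu (f - g)) :
    colorOf mu η f ≠ colorOf mu η g := by
  intro hcolor
  obtain ⟨-, hneg, a, ha, b, hb, hIab, -, hwI, hwC⟩ := hsign
  have hab : a ≠ b := by rintro rfl; simp [cycIcc] at hIab
  obtain ⟨c, hc⟩ := hTint
  obtain ⟨U, hUI, hUC⟩ := exists_inner_sign_cycIcc hηcont hu hv huv
    (hconv.1.sub_mem_span hc) hconv.2 ha hb hab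
  have hw : IntegrableOn (f - g) (Icc 0 1) mu := hf.sub hg
  have hw0 : ∫ l in Icc (0:ℝ) 1, (f - g) l ∂mu = 0 := by
    simp only [Pi.sub_apply]
    rw [integral_sub hf hg, hf1, hg1, sub_self]
  have hwη0 : ∫ l in Icc (0:ℝ) 1, (f - g) l • η l ∂mu = 0 := by
    simp_rw [Pi.sub_apply, sub_smul]
    rw [integral_sub (hf.smul_continuousOn hηcont isCompact_Icc)
      (hg.smul_continuousOn hηcont isCompact_Icc)]
    exact sub_eq_zero.2 hcolor
  refine hneg.ne' ?_
  rw [ofPred_and, ofPred_mem_eq, inter_comm, ← Measure.restrict_apply' measurableSet_Icc]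
  refine measure_setOf_neg_eq_zero_of_integral_mul_eq_zero
    (hw.mul_continuousOn (by fun_prop) isCompact_Icc)
    (integral_mul_inner_sub_eq_zero hw (hw.smul_continuousOn hηcont isCompact_Icc) hw0 hwη0 U (η a))
    (ae_restrict_of_forall_mem measurableSet_Icc fun l hl => ?_)
  by_cases hl' : l ∈ cycIcc a b
  · exact Or.inl ⟨hwI l hl', hUI l hl'⟩
  · exact Or.inr ⟨hwC l ⟨hl, hl'⟩, hUC l ⟨hl, hl'⟩⟩

/-- if the spectral locus is strictly convex and `f`, `g` are normalized densities
whose difference changes sign twice on `[0,1]`, then their colors differ. -/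
theorem colors_differ_of_changes_sign_twice
    (η : ℝ → E3) (hηcont : ContinuousOn η (Icc 0 1))
    (hηΔ : ∀ lam ∈ Icc (0:ℝ) 1, η lam ∈ simplex2)
    (u v : E3) (hu : ‖u‖ = 1) (hv : ‖v‖ = 1) (huv : (inner ℝ u v : ℝ) = 0)
    (hu0 : u 0 + u 1 + u 2 = 0) (hv0 : v 0 + v 1 + v 2 = 0)
    (mu : Measure ℝ) (hprob : IsProbabilityMeasure mu)
    (hconc : mu (Icc (0:ℝ) 1)ᶜ = 0)
    (hsupp : ∀ a b : ℝ, 0 ≤ a → a < b → b ≤ 1 → 0 < mu (Icc a b))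
    (hTint : (intA (colorTri η)).Nonempty)
    (hconv : IsStrictConvexLocus η u v)
    (f g : ℝ → ℝ)
    (hf : IntegrableOn f (Icc 0 1) mu) (hg : IntegrableOn g (Icc 0 1) mu)
    (hf1 : (∫ lam in Icc (0:ℝ) 1, f lam ∂mu) = 1)
    (hg1 : (∫ lam in Icc (0:ℝ) 1, g lam ∂mu) = 1)
    (hsign : changesSignTwice mu (f - g)) :
    colorOf mu η f ≠ colorOf mu η g :=
  colors_differ_of_changes_sign_twice_general η hηcont u v hu hv huv mu hTint hconv f g hf hg hf1
    hg1 hsign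
end
end
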